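/- arXiv:2505.11241 — 9 statements merged into one kernel-verified Lean document; each statement's English description precedes it below -/
import Mathlib

section
/- Let λ ∈ L¹(Ω) satisfy 0 < Λ₁ ≤ ‖λ‖_{L¹} ≤ Λ₂. If (μ/σ)·(T_max/T_min)^{σ−1}·(Λ₂/Λ₁) < 1, then the wage fixed-point equation for λ has a unique solution W in C_{0+}(Ω). -/
open MeasureTheory Real Set

/-- The price index operator `G[λ](x) = [(1/F) ∫_Ω |λ(y)| T(x,y)^{1-σ} dy]^{1/(1-σ)}`. -/
noncomputable def priceIndex {n : ℕ} (Ω : Set (Fin n → ℝ)) (F σ : ℝ)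
    (T : (Fin n → ℝ) → (Fin n → ℝ) → ℝ) (lam : (Fin n → ℝ) → ℝ)
    (x : Fin n → ℝ) : ℝ :=
  ((1 / F) * ∫ y in Ω, |lam y| * T x y ^ (1 - σ)) ^ (1 / (1 - σ))

/-- `W` is a nonnegative continuous solution on `Ω` of the wage fixed-point equation for `lam`. -/
def IsWageSolution {n : ℕ} (Ω : Set (Fin n → ℝ)) (F σ μ : ℝ)
    (T : (Fin n → ℝ) → (Fin n → ℝ) → ℝ) (φ lam W : (Fin n → ℝ) → ℝ) : Prop :=
  ContinuousOn W Ω ∧ (∀ x ∈ Ω, 0 ≤ W x) ∧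
  ∀ x ∈ Ω, W x = (μ / (σ * F)) *
    ∫ y in Ω, (W y * |lam y| + φ y) * priceIndex Ω F σ T lam y ^ (σ - 1) * T x y ^ (1 - σ)


/-!
The wage equation is a fixed-point problem `W = A W` for an affine integral operator on `C(Ω)`
whose linear part has the nonnegative kernel `|λ(y)| μ/(σF) G[λ](y)^{σ-1} T(x,y)^{1-σ}`.
Since `G[λ](y)^{σ-1} = F / ∫_Ω |λ(z)| T(y,z)^{1-σ} dz ≤ F T_max^{σ-1} / ‖λ‖₁`, the sup-norm
Lipschitz constant of `A` is at most `(μ/σ) (T_max/T_min)^{σ-1}`, which is `< 1` by hypothesis.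
Banach's fixed-point theorem gives the unique continuous solution, and it is nonnegative because
`A` maps the closed cone of nonnegative functions into itself.
-/

open Filter Function
open scoped NNReal

theorem ContractingWith.fixedPoint_mem_of_mapsTo {α : Type*} [MetricSpace α] [Nonempty α]
    [CompleteSpace α] {K : ℝ≥0} {f : α → α} (hf : ContractingWith K f) {s : Set α}
    (hs : IsClosed s) (hfs : MapsTo f s s) {x : α} (hx : x ∈ s) : fixedPoint f hf ∈ s :=
  hs.mem_of_tendsto (hf.tendsto_iterate_fixedPoint x) (Eventually.of_forall fun n ↦ hfs.iterate n hx)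

section ExtendByZero

variable {X : Type*} {Ω : Set X}

-- Only values on `Ω` enter the integrals below, so the value `0` off `Ω` is immaterial.
open scoped Classical in
noncomputable def extendByZero (W : Ω → ℝ) (x : X) : ℝ := if h : x ∈ Ω then W ⟨x, h⟩ else 0

@[simp]
theorem extendByZero_of_mem (W : Ω → ℝ) {x : X} (hx : x ∈ Ω) : extendByZero W x = W ⟨x, hx⟩ :=
  dif_pos hx

theorem continuousOn_extendByZero [TopologicalSpace X] {W : Ω → ℝ} (hW : Continuous W) :
    ContinuousOn (extendByZero W) Ω := by
  rw [continuousOn_iff_continuous_domRestrict]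
  convert hW
  ext ⟨x, hx⟩
  simp [hx]

end ExtendByZero

section AffineIntegralOperator

variable {X : Type*} [TopologicalSpace X] [T2Space X] [MeasurableSpace X] [OpensMeasurableSpace X]
  {μ : Measure X} {Ω : Set X} {κ : X → X → ℝ} {a b : X → ℝ}

theorem continuousOn_setIntegral_mul_kernel [FirstCountableTopology X] (hΩ : IsCompact Ω)
    (hκ : ContinuousOn (uncurry κ) (Ω ×ˢ Ω)) {g : X → ℝ} (hg : IntegrableOn g Ω μ) :
    ContinuousOn (fun x ↦ ∫ y in Ω, g y * κ x y ∂μ) Ω := by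
  obtain ⟨C, hC⟩ := (hΩ.prod hΩ).exists_bound_of_continuousOn hκ
  refine continuousOn_of_dominated (bound := fun y ↦ ‖g y‖ * C)
    (fun x hx ↦ (hg.mul_continuousOn (hκ.uncurry_left x hx) hΩ).aestronglyMeasurable)
    (fun x hx ↦ ?_) (hg.norm.mul_const C) ?_
  · filter_upwards [ae_restrict_mem hΩ.measurableSet] with y hy
    rw [norm_mul]
    exact mul_le_mul_of_nonneg_left (hC (x, y) ⟨hx, hy⟩) (norm_nonneg _)
  · filter_upwards [ae_restrict_mem hΩ.measurableSet] with y hy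
    exact continuousOn_const.mul (hκ.uncurry_right y hy)

theorem integrableOn_extendByZero_mul_add (hΩ : IsCompact Ω) (W : C(Ω, ℝ))
    (ha : IntegrableOn a Ω μ) (hb : IntegrableOn b Ω μ) :
    IntegrableOn (fun y ↦ extendByZero W y * a y + b y) Ω μ :=
  (ha.continuousOn_mul (continuousOn_extendByZero W.continuous) hΩ).add hb

variable [FirstCountableTopology X] [CompactSpace Ω] (hκ : ContinuousOn (uncurry κ) (Ω ×ˢ Ω))
  (ha : IntegrableOn a Ω μ) (hb : IntegrableOn b Ω μ)

noncomputable def affineIntegralOp (W : C(Ω, ℝ)) : C(Ω, ℝ) :=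
  ⟨Ω.domRestrict fun x ↦ ∫ y in Ω, (extendByZero W y * a y + b y) * κ x y ∂μ,
    (continuousOn_setIntegral_mul_kernel (isCompact_iff_compactSpace.2 ‹_›) hκ
      (integrableOn_extendByZero_mul_add (isCompact_iff_compactSpace.2 ‹_›) W ha hb)).domRestrict⟩

theorem affineIntegralOp_apply (W : C(Ω, ℝ)) (x : Ω) :
    affineIntegralOp hκ ha hb W x =
      ∫ y in Ω, (extendByZero W y * a y + b y) * κ x y ∂μ :=
  rfl

theorem dist_affineIntegralOp_le {q : ℝ≥0} (hq : ∀ x ∈ Ω, ∫ y in Ω, |a y * κ x y| ∂μ ≤ q)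
    (W₁ W₂ : C(Ω, ℝ)) :
    dist (affineIntegralOp hκ ha hb W₁) (affineIntegralOp hκ ha hb W₂) ≤
      q * dist W₁ W₂ := by
  have hΩ : IsCompact Ω := isCompact_iff_compactSpace.2 ‹_›
  refine (ContinuousMap.dist_le (by positivity)).2 fun x ↦ ?_
  have hint : ∀ W : C(Ω, ℝ), IntegrableOn (fun y ↦ (extendByZero W y * a y + b y) * κ x y) Ω μ :=
    fun W ↦ (integrableOn_extendByZero_mul_add hΩ W ha hb).mul_continuousOn
      (hκ.uncurry_left (x : X) x.2) hΩ
  have hbound : IntegrableOn (fun y ↦ dist W₁ W₂ * |a y * κ x y|) Ω μ :=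
    ((ha.mul_continuousOn (hκ.uncurry_left (x : X) x.2) hΩ).abs).const_mul _
  rw [Real.dist_eq, affineIntegralOp_apply, affineIntegralOp_apply,
    ← integral_sub (hint W₁) (hint W₂), ← Real.norm_eq_abs]
  refine (norm_integral_le_of_norm_le hbound ?_).trans ?_
  · filter_upwards [ae_restrict_mem hΩ.measurableSet] with y hy
    have hW : |W₁ ⟨y, hy⟩ - W₂ ⟨y, hy⟩| ≤ dist W₁ W₂ :=
      ContinuousMap.dist_apply_le_dist (f := W₁) (g := W₂) _
    calc ‖(extendByZero W₁ y * a y + b y) * κ x y - (extendByZero W₂ y * a y + b y) * κ x y‖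
        = |W₁ ⟨y, hy⟩ - W₂ ⟨y, hy⟩| * |a y * κ x y| := by
          rw [Real.norm_eq_abs, extendByZero_of_mem _ hy, extendByZero_of_mem _ hy, ← abs_mul]
          ring_nf
      _ ≤ dist W₁ W₂ * |a y * κ x y| := mul_le_mul_of_nonneg_right hW (abs_nonneg _)
  · rw [integral_const_mul, mul_comm]
    exact mul_le_mul_of_nonneg_right (hq x x.2) dist_nonneg

theorem affineIntegralOp_nonneg (ha₀ : ∀ y ∈ Ω, 0 ≤ a y) (hb₀ : ∀ᵐ y ∂μ.restrict Ω, 0 ≤ b y)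
    (hκ₀ : ∀ x ∈ Ω, ∀ y ∈ Ω, 0 ≤ κ x y) {W : C(Ω, ℝ)} (hW : 0 ≤ W) :
    0 ≤ affineIntegralOp hκ ha hb W := fun x ↦ by
  refine integral_nonneg_of_ae ?_
  filter_upwards [hb₀, ae_restrict_mem (isCompact_iff_compactSpace.2 ‹_›).measurableSet] with y hby hy
  rw [extendByZero_of_mem _ hy]
  exact mul_nonneg (add_nonneg (mul_nonneg (hW _) (ha₀ y hy)) hby) (hκ₀ x x.2 y hy)

end AffineIntegralOperator

section AffineIntegralEquation

variable {X : Type*} [TopologicalSpace X] [T2Space X] [MeasurableSpace X] [OpensMeasurableSpace X]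
  [FirstCountableTopology X] {μ : Measure X} {Ω : Set X} {κ : X → X → ℝ} {a b : X → ℝ}

theorem affineIntegralOp_apply_of_eqOn [CompactSpace Ω] (hκ : ContinuousOn (uncurry κ) (Ω ×ˢ Ω))
    (ha : IntegrableOn a Ω μ) (hb : IntegrableOn b Ω μ) {W : C(Ω, ℝ)} {W' : X → ℝ}
    (hW' : EqOn W' (extendByZero W) Ω) (x : Ω) :
    affineIntegralOp hκ ha hb W x = ∫ y in Ω, (W' y * a y + b y) * κ x y ∂μ :=
  setIntegral_congr_fun (isCompact_iff_compactSpace.2 ‹_›).measurableSet fun y hy ↦ by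
    rw [hW' hy]

theorem existsUnique_nonneg_solution_affine_integral_eq (hΩ : IsCompact Ω)
    (hκ : ContinuousOn (uncurry κ) (Ω ×ˢ Ω)) (ha : IntegrableOn a Ω μ) (hb : IntegrableOn b Ω μ)
    {q : ℝ} (hq1 : q < 1) (hq : ∀ x ∈ Ω, ∫ y in Ω, |a y * κ x y| ∂μ ≤ q)
    (ha₀ : ∀ y ∈ Ω, 0 ≤ a y) (hb₀ : ∀ᵐ y ∂μ.restrict Ω, 0 ≤ b y)
    (hκ₀ : ∀ x ∈ Ω, ∀ y ∈ Ω, 0 ≤ κ x y) :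
    ∃ W : X → ℝ, (ContinuousOn W Ω ∧ (∀ x ∈ Ω, 0 ≤ W x) ∧
        ∀ x ∈ Ω, W x = ∫ y in Ω, (W y * a y + b y) * κ x y ∂μ) ∧
      ∀ W' : X → ℝ, ContinuousOn W' Ω →
        (∀ x ∈ Ω, W' x = ∫ y in Ω, (W' y * a y + b y) * κ x y ∂μ) → EqOn W' W Ω := by
  have := isCompact_iff_compactSpace.1 hΩ
  set A := affineIntegralOp (μ := μ) hκ ha hb
  have hA : ContractingWith q.toNNReal A :=
    ⟨toNNReal_lt_one.2 hq1, LipschitzWith.of_dist_le_mul (dist_affineIntegralOp_le hκ ha hb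
      fun x hx ↦ (hq x hx).trans (le_coe_toNNReal q))⟩
  set W₀ := ContractingWith.fixedPoint A hA
  have hfix : IsFixedPt A W₀ := hA.fixedPoint_isFixedPt
  have hclosed : IsClosed {W : C(Ω, ℝ) | 0 ≤ W} := by
    simp only [ContinuousMap.le_def, ofPred_forall]
    exact isClosed_iInter fun x ↦ isClosed_le continuous_const (continuous_eval_const x)
  have hW₀ : 0 ≤ W₀ := hA.fixedPoint_mem_of_mapsTo hclosed
    (fun W hW ↦ affineIntegralOp_nonneg hκ ha hb ha₀ hb₀ hκ₀ hW) (mem_ofPred.2 le_rfl)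
  refine ⟨extendByZero W₀, ⟨continuousOn_extendByZero W₀.continuous, fun x hx ↦ ?_, fun x hx ↦ ?_⟩,
    fun W' hW' hW'eq ↦ ?_⟩
  · rw [extendByZero_of_mem _ hx]
    exact hW₀ _
  · rw [extendByZero_of_mem _ hx]
    exact (DFunLike.congr_fun hfix.eq ⟨x, hx⟩).symm
  · let V : C(Ω, ℝ) := ⟨Ω.domRestrict W', hW'.domRestrict⟩
    have hV : EqOn W' (extendByZero V) Ω := fun x hx ↦ (extendByZero_of_mem V hx).symm
    have hVfix : IsFixedPt A V := ContinuousMap.ext fun x ↦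
      (affineIntegralOp_apply_of_eqOn hκ ha hb hV x).trans (hW'eq x x.2).symm
    rw [← hA.fixedPoint_unique' hVfix hfix]
    exact hV

end AffineIntegralEquation

theorem rpow_one_sub_mem_Icc {σ Tmin Tmax t : ℝ} (hσ : 1 ≤ σ) (hTmin : 0 < Tmin)
    (ht : t ∈ Icc Tmin Tmax) : t ^ (1 - σ) ∈ Icc (Tmax ^ (1 - σ)) (Tmin ^ (1 - σ)) :=
  ⟨rpow_le_rpow_of_nonpos (hTmin.trans_le ht.1) ht.2 (by linarith),
    rpow_le_rpow_of_nonpos hTmin ht.1 (by linarith)⟩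

section WageEquation

variable {n : ℕ} {Ω : Set (Fin n → ℝ)} {T : (Fin n → ℝ) → (Fin n → ℝ) → ℝ}
  {Tmin Tmax σ μ F : ℝ} {lam : (Fin n → ℝ) → ℝ}

theorem priceIndex_rpow_sub_one (hF : 0 ≤ F) (hσ : σ ≠ 1) {y : Fin n → ℝ}
    (hI : 0 ≤ ∫ z in Ω, |lam z| * T y z ^ (1 - σ)) :
    priceIndex Ω F σ T lam y ^ (σ - 1) = F / ∫ z in Ω, |lam z| * T y z ^ (1 - σ) := by
  have hexp : 1 / (1 - σ) * (σ - 1) = -1 := by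
    field_simp [sub_ne_zero.2 hσ.symm]
    ring
  rw [priceIndex, ← rpow_mul (by positivity), hexp, rpow_neg_one, mul_inv, one_div, inv_inv,
    div_eq_mul_inv]

theorem continuousOn_rpow_one_sub (hTcont : ContinuousOn (uncurry T) (Ω ×ˢ Ω))
    (hTpos : ∀ x ∈ Ω, ∀ y ∈ Ω, 0 < T x y) :
    ContinuousOn (uncurry fun x y ↦ T x y ^ (1 - σ)) (Ω ×ˢ Ω) :=
  hTcont.rpow_const fun _ hp ↦ Or.inl (hTpos _ hp.1 _ hp.2).ne'

theorem mul_rpow_le_setIntegral_abs_mul_rpow (hΩ : IsCompact Ω)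
    (hTcont : ContinuousOn (uncurry T) (Ω ×ˢ Ω)) (hTmin : 0 < Tmin)
    (hT : ∀ x ∈ Ω, ∀ y ∈ Ω, T x y ∈ Icc Tmin Tmax) (hσ : 1 ≤ σ) (hlam : IntegrableOn lam Ω)
    {y : Fin n → ℝ} (hy : y ∈ Ω) :
    (∫ z in Ω, |lam z|) * Tmax ^ (1 - σ) ≤ ∫ z in Ω, |lam z| * T y z ^ (1 - σ) := by
  have hTpow := continuousOn_rpow_one_sub (σ := σ) hTcont fun x hx y hy ↦
    hTmin.trans_le (hT x hx y hy).1
  have hlam' : IntegrableOn (fun z ↦ |lam z|) Ω := hlam.abs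
  rw [← integral_mul_const]
  exact setIntegral_mono_on (hlam'.mul_const _)
    (hlam'.mul_continuousOn (hTpow.uncurry_left y hy) hΩ) hΩ.measurableSet fun z hz ↦
      mul_le_mul_of_nonneg_left (rpow_one_sub_mem_Icc hσ hTmin (hT y hy z hz)).1 (abs_nonneg _)

theorem setIntegral_abs_mul_rpow_pos (hΩ : IsCompact Ω)
    (hTcont : ContinuousOn (uncurry T) (Ω ×ˢ Ω)) (hTmin : 0 < Tmin)
    (hT : ∀ x ∈ Ω, ∀ y ∈ Ω, T x y ∈ Icc Tmin Tmax) (hσ : 1 ≤ σ) (hlam : IntegrableOn lam Ω)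
    (hL : 0 < ∫ z in Ω, |lam z|) {y : Fin n → ℝ} (hy : y ∈ Ω) :
    0 < ∫ z in Ω, |lam z| * T y z ^ (1 - σ) :=
  have hTmax : 0 < Tmax := hTmin.trans_le ((hT y hy y hy).1.trans (hT y hy y hy).2)
  (mul_pos hL (rpow_pos_of_pos hTmax _)).trans_le
    (mul_rpow_le_setIntegral_abs_mul_rpow hΩ hTcont hTmin hT hσ hlam hy)

theorem priceIndex_rpow_sub_one_mem_Icc (hΩ : IsCompact Ω)
    (hTcont : ContinuousOn (uncurry T) (Ω ×ˢ Ω)) (hTmin : 0 < Tmin)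
    (hT : ∀ x ∈ Ω, ∀ y ∈ Ω, T x y ∈ Icc Tmin Tmax) (hσ : 1 < σ) (hF : 0 ≤ F)
    (hlam : IntegrableOn lam Ω) (hL : 0 < ∫ z in Ω, |lam z|) {y : Fin n → ℝ} (hy : y ∈ Ω) :
    priceIndex Ω F σ T lam y ^ (σ - 1) ∈ Icc 0 (F * Tmax ^ (σ - 1) / ∫ z in Ω, |lam z|) := by
  have hTmax : 0 < Tmax := hTmin.trans_le ((hT y hy y hy).1.trans (hT y hy y hy).2)
  have hI := setIntegral_abs_mul_rpow_pos hΩ hTcont hTmin hT hσ.le hlam hL hy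
  rw [priceIndex_rpow_sub_one hF hσ.ne' hI.le]
  refine ⟨div_nonneg hF hI.le, ?_⟩
  calc F / ∫ z in Ω, |lam z| * T y z ^ (1 - σ)
      ≤ F / ((∫ z in Ω, |lam z|) * Tmax ^ (1 - σ)) :=
        div_le_div_of_nonneg_left hF (by positivity)
          (mul_rpow_le_setIntegral_abs_mul_rpow hΩ hTcont hTmin hT hσ.le hlam hy)
    _ = F * Tmax ^ (σ - 1) / ∫ z in Ω, |lam z| := by
        rw [show 1 - σ = -(σ - 1) by ring, rpow_neg hTmax.le]
        field_simp

theorem continuousOn_priceIndex_rpow_sub_one (hΩ : IsCompact Ω)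
    (hTcont : ContinuousOn (uncurry T) (Ω ×ˢ Ω)) (hTmin : 0 < Tmin)
    (hT : ∀ x ∈ Ω, ∀ y ∈ Ω, T x y ∈ Icc Tmin Tmax) (hσ : 1 < σ) (hF : 0 ≤ F)
    (hlam : IntegrableOn lam Ω) (hL : 0 < ∫ z in Ω, |lam z|) :
    ContinuousOn (fun y ↦ priceIndex Ω F σ T lam y ^ (σ - 1)) Ω := by
  have hI y (hy : y ∈ Ω) := setIntegral_abs_mul_rpow_pos hΩ hTcont hTmin hT hσ.le hlam hL hy
  have hTpow := continuousOn_rpow_one_sub (σ := σ) hTcont fun x hx y hy ↦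
    hTmin.trans_le (hT x hx y hy).1
  refine ((continuousOn_const (c := F)).div
    (continuousOn_setIntegral_mul_kernel hΩ hTpow hlam.abs) fun y hy ↦ (hI y hy).ne').congr
    fun y hy ↦ ?_
  exact priceIndex_rpow_sub_one hF hσ.ne' (hI y hy).le

noncomputable def wageKernel (Ω : Set (Fin n → ℝ)) (F σ μ : ℝ)
    (T : (Fin n → ℝ) → (Fin n → ℝ) → ℝ) (lam : (Fin n → ℝ) → ℝ) (x y : Fin n → ℝ) : ℝ :=
  μ / (σ * F) * (priceIndex Ω F σ T lam y ^ (σ - 1) * T x y ^ (1 - σ))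

theorem isWageSolution_iff {φ W : (Fin n → ℝ) → ℝ} :
    IsWageSolution Ω F σ μ T φ lam W ↔ ContinuousOn W Ω ∧ (∀ x ∈ Ω, 0 ≤ W x) ∧
      ∀ x ∈ Ω, W x = ∫ y in Ω, (W y * |lam y| + φ y) * wageKernel Ω F σ μ T lam x y := by
  have h x : ∫ y in Ω, (W y * |lam y| + φ y) * wageKernel Ω F σ μ T lam x y =
      μ / (σ * F) * ∫ y in Ω,
        (W y * |lam y| + φ y) * priceIndex Ω F σ T lam y ^ (σ - 1) * T x y ^ (1 - σ) := by
    rw [← integral_const_mul]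
    congr 1 with y
    rw [wageKernel]
    ring
  simp only [IsWageSolution, h]

theorem continuousOn_wageKernel (hΩ : IsCompact Ω)
    (hTcont : ContinuousOn (uncurry T) (Ω ×ˢ Ω)) (hTmin : 0 < Tmin)
    (hT : ∀ x ∈ Ω, ∀ y ∈ Ω, T x y ∈ Icc Tmin Tmax) (hσ : 1 < σ) (hF : 0 ≤ F)
    (hlam : IntegrableOn lam Ω) (hL : 0 < ∫ z in Ω, |lam z|) :
    ContinuousOn (uncurry (wageKernel Ω F σ μ T lam)) (Ω ×ˢ Ω) :=
  continuousOn_const.mul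
    (((continuousOn_priceIndex_rpow_sub_one hΩ hTcont hTmin hT hσ hF hlam hL).comp
      continuousOn_snd fun _ hp ↦ hp.2).mul
    (continuousOn_rpow_one_sub hTcont fun x hx y hy ↦ hTmin.trans_le (hT x hx y hy).1))

theorem wageKernel_mem_Icc (hΩ : IsCompact Ω)
    (hTcont : ContinuousOn (uncurry T) (Ω ×ˢ Ω)) (hTmin : 0 < Tmin)
    (hT : ∀ x ∈ Ω, ∀ y ∈ Ω, T x y ∈ Icc Tmin Tmax) (hσ : 1 < σ) (hμ : 0 ≤ μ) (hF : 0 < F)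
    (hlam : IntegrableOn lam Ω) (hL : 0 < ∫ z in Ω, |lam z|) {x y : Fin n → ℝ} (hx : x ∈ Ω)
    (hy : y ∈ Ω) :
    wageKernel Ω F σ μ T lam x y ∈
      Icc 0 (μ / σ * (Tmax / Tmin) ^ (σ - 1) / ∫ z in Ω, |lam z|) := by
  have hTmax : 0 < Tmax := hTmin.trans_le ((hT y hy y hy).1.trans (hT y hy y hy).2)
  have hG := priceIndex_rpow_sub_one_mem_Icc hΩ hTcont hTmin hT hσ hF.le hlam hL hy
  have hTxy := rpow_one_sub_mem_Icc hσ.le hTmin (hT x hx y hy)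
  have hTxy₀ : 0 ≤ T x y ^ (1 - σ) := (rpow_nonneg hTmax.le _).trans hTxy.1
  refine ⟨mul_nonneg (by positivity) (mul_nonneg hG.1 hTxy₀), ?_⟩
  calc wageKernel Ω F σ μ T lam x y
      ≤ μ / (σ * F) * (F * Tmax ^ (σ - 1) / (∫ z in Ω, |lam z|) * Tmin ^ (1 - σ)) :=
        mul_le_mul_of_nonneg_left (mul_le_mul hG.2 hTxy.2 hTxy₀ (by positivity)) (by positivity)
    _ = μ / σ * (Tmax / Tmin) ^ (σ - 1) / ∫ z in Ω, |lam z| := by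
        rw [div_rpow hTmax.le hTmin.le, show 1 - σ = -(σ - 1) by ring, rpow_neg hTmin.le]
        field_simp

theorem setIntegral_abs_mul_wageKernel_le (hΩ : IsCompact Ω)
    (hTcont : ContinuousOn (uncurry T) (Ω ×ˢ Ω)) (hTmin : 0 < Tmin)
    (hT : ∀ x ∈ Ω, ∀ y ∈ Ω, T x y ∈ Icc Tmin Tmax) (hσ : 1 < σ) (hμ : 0 ≤ μ) (hF : 0 < F)
    (hlam : IntegrableOn lam Ω) (hL : 0 < ∫ z in Ω, |lam z|) {x : Fin n → ℝ} (hx : x ∈ Ω) :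
    ∫ y in Ω, |(|lam y|) * wageKernel Ω F σ μ T lam x y| ≤ μ / σ * (Tmax / Tmin) ^ (σ - 1) := by
  set C := μ / σ * (Tmax / Tmin) ^ (σ - 1) / ∫ z in Ω, |lam z|
  calc ∫ y in Ω, |(|lam y|) * wageKernel Ω F σ μ T lam x y|
      ≤ ∫ y in Ω, |lam y| * C := by
        refine integral_mono_of_nonneg (Eventually.of_forall fun _ ↦ abs_nonneg _)
          (hlam.abs.mul_const C) ?_
        filter_upwards [ae_restrict_mem hΩ.measurableSet] with y hy
        have hκ := wageKernel_mem_Icc hΩ hTcont hTmin hT hσ hμ hF hlam hL hx hy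
        rw [abs_mul, abs_abs, abs_of_nonneg hκ.1]
        exact mul_le_mul_of_nonneg_left hκ.2 (abs_nonneg _)
    _ = μ / σ * (Tmax / Tmin) ^ (σ - 1) := by
        rw [integral_mul_const, mul_div_cancel₀ _ hL.ne']

end WageEquation

theorem wage_fixed_point_existence_uniqueness_general {n : ℕ} (Ω : Set (Fin n → ℝ))
    (hΩc : IsCompact Ω)
    (T : (Fin n → ℝ) → (Fin n → ℝ) → ℝ)
    (hTcont : ContinuousOn (fun p : (Fin n → ℝ) × (Fin n → ℝ) => T p.1 p.2) (Ω ×ˢ Ω))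
    (Tmin Tmax : ℝ) (hTmin : 1 ≤ Tmin)
    (hT : ∀ x ∈ Ω, ∀ y ∈ Ω, T x y ∈ Icc Tmin Tmax)
    (σ μ F : ℝ) (hσ : 1 < σ) (hμ : μ ∈ Ioo (0 : ℝ) 1) (hF : 0 < F)
    (φ : (Fin n → ℝ) → ℝ) (hφint : IntegrableOn φ Ω)
    (hφ0 : ∀ᵐ x ∂(volume.restrict Ω), 0 ≤ φ x)
    (lam : (Fin n → ℝ) → ℝ) (hlam : IntegrableOn lam Ω)
    (Λ₁ Λ₂ : ℝ) (hΛ₁ : 0 < Λ₁)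
    (h₁ : Λ₁ ≤ ∫ x in Ω, |lam x|) (h₂ : (∫ x in Ω, |lam x|) ≤ Λ₂)
    (hcond : μ / σ * (Tmax / Tmin) ^ (σ - 1) * (Λ₂ / Λ₁) < 1) :
    ∃ W : (Fin n → ℝ) → ℝ, IsWageSolution Ω F σ μ T φ lam W ∧
      ∀ W' : (Fin n → ℝ) → ℝ, IsWageSolution Ω F σ μ T φ lam W' → EqOn W' W Ω := by
  have hTmin₀ : 0 < Tmin := one_pos.trans_le hTmin
  have hL : 0 < ∫ x in Ω, |lam x| := hΛ₁.trans_le h₁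
  have hq : μ / σ * (Tmax / Tmin) ^ (σ - 1) < 1 := by
    nlinarith [(one_le_div hΛ₁).2 (h₁.trans h₂)]
  obtain ⟨W, hW, huniq⟩ := existsUnique_nonneg_solution_affine_integral_eq hΩc
    (continuousOn_wageKernel (μ := μ) hΩc hTcont hTmin₀ hT hσ hF.le hlam hL) hlam.abs hφint hq
    (fun x hx ↦ setIntegral_abs_mul_wageKernel_le hΩc hTcont hTmin₀ hT hσ hμ.1.le hF hlam hL hx)
    (fun y _ ↦ abs_nonneg (lam y)) hφ0
    (fun x hx y hy ↦ (wageKernel_mem_Icc hΩc hTcont hTmin₀ hT hσ hμ.1.le hF hlam hL hx hy).1)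
  exact ⟨W, isWageSolution_iff.2 hW, fun W' hW' ↦ huniq W' hW'.1 (isWageSolution_iff.1 hW').2.2⟩

theorem wage_fixed_point_existence_uniqueness {n : ℕ} (Ω : Set (Fin n → ℝ))
    (hΩc : IsCompact Ω) (hΩpos : 0 < volume Ω)
    (T : (Fin n → ℝ) → (Fin n → ℝ) → ℝ)
    (hTcont : ContinuousOn (fun p : (Fin n → ℝ) × (Fin n → ℝ) => T p.1 p.2) (Ω ×ˢ Ω))
    (Tmin Tmax : ℝ) (hTmin : 1 ≤ Tmin)
    (hT : ∀ x ∈ Ω, ∀ y ∈ Ω, T x y ∈ Icc Tmin Tmax)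
    (σ μ F Φ : ℝ) (hσ : 1 < σ) (hμ : μ ∈ Ioo (0 : ℝ) 1) (hF : 0 < F) (hΦ : 0 < Φ)
    (φ : (Fin n → ℝ) → ℝ) (hφint : IntegrableOn φ Ω)
    (hφ0 : ∀ᵐ x ∂(volume.restrict Ω), 0 ≤ φ x) (hφΦ : (∫ x in Ω, φ x) = Φ)
    (lam : (Fin n → ℝ) → ℝ) (hlam : IntegrableOn lam Ω)
    (Λ₁ Λ₂ : ℝ) (hΛ₁ : 0 < Λ₁)
    (h₁ : Λ₁ ≤ ∫ x in Ω, |lam x|) (h₂ : (∫ x in Ω, |lam x|) ≤ Λ₂)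
    (hcond : μ / σ * (Tmax / Tmin) ^ (σ - 1) * (Λ₂ / Λ₁) < 1) :
    ∃ W : (Fin n → ℝ) → ℝ, IsWageSolution Ω F σ μ T φ lam W ∧
      ∀ W' : (Fin n → ℝ) → ℝ, IsWageSolution Ω F σ μ T φ lam W' → EqOn W' W Ω :=
  wage_fixed_point_existence_uniqueness_general Ω hΩc T hTcont Tmin Tmax hTmin hT σ μ F hσ hμ hF φ
    hφint hφ0 lam hlam Λ₁ Λ₂ hΛ₁ h₁ h₂ hcond
end

section
/- Let 0 < b < Λ and suppose (μ/σ)·(T_max/T_min)^{σ−1}·(Λ+b)/(Λ−b) < 1. Then there exists a constant K > 0, depending only on v, μ, σ, F, T_min, T_max, Λ, b and Φ (and in particular not on λ₀ ∈ L¹_Λ(Ω)), such that for every λ ∈ L¹(Ω) with ‖λ − λ₀‖_{L¹} ≤ b one has ‖Ψ[λ]‖_{L¹} ≤ K; one may take K = v·ω_U·(Λ+b)·(1 + (Λ+b)/Λ), where ω_U := w_U·G_L^{−μ}, G_L := F^{1/(σ−1)} T_min (Λ+b)^{1/(1−σ)}, and w_U := [(μ/σ)(T_max/T_min)^{σ−1}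 Φ/(Λ−b)] / [1 − (μ/σ)(T_max/T_min)^{σ−1}(Λ+b)/(Λ−b)]. -/
/-! The L¹ distance to `λ₀` pins `∫ |λ|` in `[Λ - b, Λ + b]`, so the market access
`∫ |λ(y)| T(x,y)^{1-σ} dy` lies between `Tmax^{1-σ} (Λ - b)` and `Tmin^{1-σ} (Λ + b)`. This bounds
the price index from below by `G_L` and `G^{σ-1}` from above by `F Tmax^{σ-1} / (Λ - b)`.
At a maximum point of the continuous wage on the compact `Ω`, the wage equation then gives
`max W ≤ a · max W + c` with `a < 1` by hypothesis, i.e. `W ≤ w_U`. Hence `0 ≤ ω ≤ ω_U`,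
`|ω̃| ≤ ω_U (Λ + b) / Λ`, and integrating `|Ψ| ≤ v (ω_U + |ω̃|) |λ|` gives the bound `K`. -/

open MeasureTheory Real Set

/-- The real wage `ω[λ] = w[λ]·G[λ]^{−μ}` built from a wage solution `W` for `lam`. -/
noncomputable def omegaOf {n : ℕ} (Ω : Set (Fin n → ℝ)) (F σ μ : ℝ)
    (T : (Fin n → ℝ) → (Fin n → ℝ) → ℝ) (lam W : (Fin n → ℝ) → ℝ)
    (x : Fin n → ℝ) : ℝ :=
  W x * priceIndex Ω F σ T lam x ^ (-μ)

/-- The right-hand side `Ψ[λ] = v(ω[λ] − ω̃[λ])λ` of the migration dynamics,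
built from a wage solution `W` for `lam`. -/
noncomputable def psiOf {n : ℕ} (Ω : Set (Fin n → ℝ)) (F σ μ Λ v : ℝ)
    (T : (Fin n → ℝ) → (Fin n → ℝ) → ℝ) (lam W : (Fin n → ℝ) → ℝ)
    (x : Fin n → ℝ) : ℝ :=
  v * (omegaOf Ω F σ μ T lam W x -
    (1 / Λ) * ∫ y in Ω, omegaOf Ω F σ μ T lam W y * lam y) * lam x

theorem abs_integral_abs_sub_integral_abs_le {α : Type*} [MeasurableSpace α] {m : Measure α}
    {f g : α → ℝ} (hf : Integrable f m) (hg : Integrable g m) :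
    |∫ x, |f x| ∂m - ∫ x, |g x| ∂m| ≤ ∫ x, |f x - g x| ∂m := by
  rw [← integral_sub hf.abs hg.abs]
  exact abs_integral_le_integral_abs.trans <|
    integral_mono (hf.abs.sub hg.abs).abs (hf.sub hg).abs fun x => abs_abs_sub_abs_le_abs_sub _ _

theorem integral_abs_mem_Icc_of_integral_abs_sub_le {α : Type*} [MeasurableSpace α]
    {m : Measure α} {f g : α → ℝ} {Λ b : ℝ} (hf : Integrable f m) (hg : Integrable g m)
    (hg0 : ∀ᵐ x ∂m, 0 ≤ g x) (hgΛ : ∫ x, g x ∂m = Λ) (hfg : ∫ x, |f x - g x| ∂m ≤ b) :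
    ∫ x, |f x| ∂m ∈ Icc (Λ - b) (Λ + b) := by
  have hgabs : ∫ x, |g x| ∂m = Λ :=
    hgΛ ▸ integral_congr_ae (hg0.mono fun x hx => abs_of_nonneg hx)
  have h := (abs_integral_abs_sub_integral_abs_le hf hg).trans hfg
  rw [hgabs, abs_sub_le_iff] at h
  constructor <;> linarith

theorem integral_le_mul_integral_of_ae_le {α : Type*} [MeasurableSpace α] {m : Measure α}
    {f g : α → ℝ} {C : ℝ} (hf : 0 ≤ᵐ[m] f) (hg : Integrable g m)
    (hfg : ∀ᵐ x ∂m, f x ≤ C * g x) : ∫ x, f x ∂m ≤ C * ∫ x, g x ∂m :=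
  (integral_mono_of_nonneg hf (hg.const_mul C) hfg).trans_eq (integral_const_mul C g)

theorem setIntegral_mul_mem_Icc {X : Type*} [TopologicalSpace X] [T2Space X]
    [MeasurableSpace X] [OpensMeasurableSpace X] {m : Measure X} {s : Set X} {f k : X → ℝ}
    {a b : ℝ} (hs : IsCompact s) (hf : IntegrableOn f s m) (hf0 : ∀ x ∈ s, 0 ≤ f x)
    (hk : ContinuousOn k s) (hkab : ∀ x ∈ s, k x ∈ Icc a b) :
    ∫ x in s, f x * k x ∂m ∈ Icc (a * ∫ x in s, f x ∂m) (b * ∫ x in s, f x ∂m) := by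
  have hfk : IntegrableOn (fun x => f x * k x) s m := hf.mul_continuousOn hk hs
  rw [← integral_const_mul, ← integral_const_mul]
  refine ⟨setIntegral_mono_on (hf.const_mul a) hfk hs.measurableSet fun x hx => ?_,
    setIntegral_mono_on hfk (hf.const_mul b) hs.measurableSet fun x hx => ?_⟩
  · rw [mul_comm]; exact mul_le_mul_of_nonneg_left (hkab x hx).1 (hf0 x hx)
  · rw [mul_comm b]; exact mul_le_mul_of_nonneg_left (hkab x hx).2 (hf0 x hx)

theorem rpow_one_div_one_sub_rpow_sub_one {A σ : ℝ} (hA : 0 ≤ A) (hσ : σ ≠ 1) :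
    (A ^ (1 / (1 - σ))) ^ (σ - 1) = A⁻¹ := by
  have h : 1 - σ ≠ 0 := sub_ne_zero.2 hσ.symm
  rw [← rpow_mul hA, show 1 / (1 - σ) * (σ - 1) = -1 by field_simp; ring, rpow_neg_one]

theorem one_div_mul_rpow_one_div_one_sub {F Tmin U σ : ℝ} (hF : 0 < F) (hTmin : 0 < Tmin)
    (hU : 0 ≤ U) (hσ : σ ≠ 1) :
    (1 / F * (Tmin ^ (1 - σ) * U)) ^ (1 / (1 - σ)) =
      F ^ (1 / (σ - 1)) * Tmin * U ^ (1 / (1 - σ)) := by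
  have h : 1 - σ ≠ 0 := sub_ne_zero.2 hσ.symm
  have hF' : (1 / F) ^ (1 / (1 - σ)) = F ^ (1 / (σ - 1)) := by
    rw [one_div F, inv_rpow hF.le, ← rpow_neg hF.le]
    congr 1
    rw [← one_div_neg_eq_neg_one_div, neg_sub]
  have hTmin' : (Tmin ^ (1 - σ)) ^ (1 / (1 - σ)) = Tmin := by
    rw [← rpow_mul hTmin.le, mul_one_div_cancel h, rpow_one]
  rw [mul_rpow (by positivity) (by positivity), mul_rpow (by positivity) hU, hF', hTmin', mul_assoc]

section Model

variable {n : ℕ} {Ω : Set (Fin n → ℝ)} {T : (Fin n → ℝ) → (Fin n → ℝ) → ℝ}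
  {Tmin Tmax σ μ F : ℝ} {φ lam W : (Fin n → ℝ) → ℝ}

theorem setIntegral_abs_mul_rpow_mem_Icc (hΩ : IsCompact Ω)
    (hTcont : ContinuousOn (fun p : (Fin n → ℝ) × (Fin n → ℝ) => T p.1 p.2) (Ω ×ˢ Ω))
    (hTmin : 0 < Tmin) (hT : ∀ x ∈ Ω, ∀ y ∈ Ω, T x y ∈ Icc Tmin Tmax) (hσ : 1 ≤ σ)
    (hlam : IntegrableOn lam Ω) {x : Fin n → ℝ} (hx : x ∈ Ω) :
    ∫ y in Ω, |lam y| * T x y ^ (1 - σ) ∈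
      Icc (Tmax ^ (1 - σ) * ∫ y in Ω, |lam y|) (Tmin ^ (1 - σ) * ∫ y in Ω, |lam y|) := by
  have hTx : ContinuousOn (T x) Ω :=
    hTcont.comp (continuous_const.prodMk continuous_id).continuousOn fun y hy => ⟨hx, hy⟩
  have hσ' : 1 - σ ≤ 0 := by linarith
  refine setIntegral_mul_mem_Icc hΩ hlam.abs (fun y _ => abs_nonneg _)
    (hTx.rpow_const fun y hy => Or.inl (hTmin.trans_le (hT x hx y hy).1).ne') fun y hy => ?_
  exact ⟨rpow_le_rpow_of_nonpos (hTmin.trans_le (hT x hx y hy).1) (hT x hx y hy).2 hσ',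
    rpow_le_rpow_of_nonpos hTmin (hT x hx y hy).1 hσ'⟩

theorem priceIndex_bounds_of_setIntegral_mem_Icc {L U : ℝ} (hF : 0 < F) (hσ : 1 < σ)
    (hTmin : 0 < Tmin) (hTmax : 0 < Tmax) (hL : 0 < L) {x : Fin n → ℝ}
    (hA : ∫ y in Ω, |lam y| * T x y ^ (1 - σ) ∈ Icc (Tmax ^ (1 - σ) * L) (Tmin ^ (1 - σ) * U)) :
    F ^ (1 / (σ - 1)) * Tmin * U ^ (1 / (1 - σ)) ≤ priceIndex Ω F σ T lam x ∧
      priceIndex Ω F σ T lam x ^ (σ - 1) ≤ F * Tmax ^ (σ - 1) / L := by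
  set A := ∫ y in Ω, |lam y| * T x y ^ (1 - σ)
  have hTmax' : 0 < Tmax ^ (1 - σ) * L := by positivity
  have hU : 0 ≤ U := (pos_of_mul_pos_right (hTmax'.trans_le (hA.1.trans hA.2))
    (rpow_nonneg hTmin.le _)).le
  have hbase : 0 < 1 / F * A := by have := hTmax'.trans_le hA.1; positivity
  constructor
  · rw [← one_div_mul_rpow_one_div_one_sub hF hTmin hU hσ.ne']
    exact rpow_le_rpow_of_nonpos hbase (by gcongr; exact hA.2)
      (div_nonpos_of_nonneg_of_nonpos zero_le_one (by linarith))
  · have hTmax_inv : Tmax ^ (1 - σ) = (Tmax ^ (σ - 1))⁻¹ := by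
      rw [← rpow_neg hTmax.le, neg_sub]
    calc priceIndex Ω F σ T lam x ^ (σ - 1) = (1 / F * A)⁻¹ :=
          rpow_one_div_one_sub_rpow_sub_one hbase.le hσ.ne'
      _ ≤ (1 / F * (Tmax ^ (1 - σ) * L))⁻¹ := by gcongr; exact hA.1
      _ = F * Tmax ^ (σ - 1) / L := by rw [hTmax_inv]; field_simp

theorem priceIndex_bounds {L U : ℝ} (hΩ : IsCompact Ω)
    (hTcont : ContinuousOn (fun p : (Fin n → ℝ) × (Fin n → ℝ) => T p.1 p.2) (Ω ×ˢ Ω))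
    (hTmin : 0 < Tmin) (hT : ∀ x ∈ Ω, ∀ y ∈ Ω, T x y ∈ Icc Tmin Tmax) (hF : 0 < F) (hσ : 1 < σ)
    (hL : 0 < L) (hlam : IntegrableOn lam Ω) (hI : ∫ y in Ω, |lam y| ∈ Icc L U)
    {x : Fin n → ℝ} (hx : x ∈ Ω) :
    F ^ (1 / (σ - 1)) * Tmin * U ^ (1 / (1 - σ)) ≤ priceIndex Ω F σ T lam x ∧
      priceIndex Ω F σ T lam x ^ (σ - 1) ≤ F * Tmax ^ (σ - 1) / L := by
  have hTmax : 0 < Tmax := hTmin.trans_le ((hT x hx x hx).1.trans (hT x hx x hx).2)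
  obtain ⟨hA₁, hA₂⟩ := setIntegral_abs_mul_rpow_mem_Icc hΩ hTcont hTmin hT hσ.le hlam hx
  exact priceIndex_bounds_of_setIntegral_mem_Icc hF hσ hTmin hTmax hL
    ⟨le_trans (by gcongr; exact hI.1) hA₁, hA₂.trans (by gcongr; exact hI.2)⟩

theorem priceIndex_rpow_mul_rpow_mem_Icc {L : ℝ} (hTmin : 0 < Tmin) (hTmax : 0 ≤ Tmax)
    (hσ : 1 ≤ σ) (hF : 0 ≤ F) (hL : 0 ≤ L) {x y : Fin n → ℝ}
    (hG₀ : 0 ≤ priceIndex Ω F σ T lam y)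
    (hG : priceIndex Ω F σ T lam y ^ (σ - 1) ≤ F * Tmax ^ (σ - 1) / L) (hT : Tmin ≤ T x y) :
    priceIndex Ω F σ T lam y ^ (σ - 1) * T x y ^ (1 - σ) ∈
      Icc 0 (F * (Tmax / Tmin) ^ (σ - 1) / L) := by
  have hTxy : 0 < T x y := hTmin.trans_le hT
  refine ⟨mul_nonneg (rpow_nonneg hG₀ _) (rpow_nonneg hTxy.le _), ?_⟩
  calc _ ≤ F * Tmax ^ (σ - 1) / L * Tmin ^ (1 - σ) :=
        mul_le_mul hG (rpow_le_rpow_of_nonpos hTmin hT (by linarith)) (rpow_nonneg hTxy.le _)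
          (by positivity)
    _ = F * (Tmax / Tmin) ^ (σ - 1) / L := by
        rw [div_rpow hTmax hTmin.le, ← neg_sub σ 1, rpow_neg hTmin.le]
        ring

theorem IsWageSolution.le_mul_of_kernel_le (hW : IsWageSolution Ω F σ μ T φ lam W)
    (hΩ : MeasurableSet Ω) (hμ : 0 ≤ μ / (σ * F)) (hφ : IntegrableOn φ Ω)
    (hφ0 : ∀ᵐ y ∂(volume.restrict Ω), 0 ≤ φ y) (hlam : IntegrableOn lam Ω) {C M : ℝ}
    (hC : ∀ x ∈ Ω, ∀ y ∈ Ω, priceIndex Ω F σ T lam y ^ (σ - 1) * T x y ^ (1 - σ) ∈ Icc 0 C)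
    (hM : ∀ y ∈ Ω, W y ≤ M) {x : Fin n → ℝ} (hx : x ∈ Ω) :
    W x ≤ μ / (σ * F) * C * (M * (∫ y in Ω, |lam y|) + ∫ y in Ω, φ y) := by
  have hlam_abs : IntegrableOn (fun y => |lam y|) Ω := hlam.abs
  have hMint : IntegrableOn (fun y => M * |lam y| + φ y) Ω := (hlam_abs.const_mul M).add hφ
  have hint : ∫ y in Ω, (W y * |lam y| + φ y) * priceIndex Ω F σ T lam y ^ (σ - 1) *
      T x y ^ (1 - σ) ≤ C * ∫ y in Ω, M * |lam y| + φ y := by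
    simp only [mul_assoc]
    refine integral_le_mul_integral_of_ae_le ?_ hMint ?_ <;>
      filter_upwards [ae_restrict_mem hΩ, hφ0] with y hy hφy
    all_goals
      have hWφ : 0 ≤ W y * |lam y| + φ y :=
        add_nonneg (mul_nonneg (hW.2.1 y hy) (abs_nonneg _)) hφy
    · exact mul_nonneg hWφ (hC x hx y hy).1
    · rw [mul_comm C]
      exact mul_le_mul (by gcongr; exact hM y hy) (hC x hx y hy).2 (hC x hx y hy).1
        (hWφ.trans (by gcongr; exact hM y hy))
  rw [integral_add (hlam_abs.const_mul M) hφ, integral_const_mul] at hint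
  rw [hW.2.2 x hx, mul_assoc]
  exact mul_le_mul_of_nonneg_left hint hμ

theorem IsWageSolution.le_div_one_sub (hW : IsWageSolution Ω F σ μ T φ lam W)
    (hΩ : IsCompact Ω) (hμ : 0 ≤ μ / (σ * F)) (hφ : IntegrableOn φ Ω)
    (hφ0 : ∀ᵐ y ∂(volume.restrict Ω), 0 ≤ φ y) (hlam : IntegrableOn lam Ω) {C U : ℝ}
    (hC : ∀ x ∈ Ω, ∀ y ∈ Ω, priceIndex Ω F σ T lam y ^ (σ - 1) * T x y ^ (1 - σ) ∈ Icc 0 C)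
    (hU : ∫ y in Ω, |lam y| ≤ U) (hCU : μ / (σ * F) * C * U < 1) {x : Fin n → ℝ}
    (hx : x ∈ Ω) :
    W x ≤ μ / (σ * F) * C * (∫ y in Ω, φ y) / (1 - μ / (σ * F) * C * U) := by
  obtain ⟨x₀, hx₀, hmax⟩ := hΩ.exists_isMaxOn ⟨x, hx⟩ hW.1
  have hx₀max := hW.le_mul_of_kernel_le hΩ.measurableSet hμ hφ hφ0 hlam hC
    (fun y hy => hmax hy) hx₀
  set κ := μ / (σ * F) * C
  have hκ : 0 ≤ κ := mul_nonneg hμ ((hC x₀ hx₀ x₀ hx₀).1.trans (hC x₀ hx₀ x₀ hx₀).2)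
  have hWU : κ * (W x₀ * ∫ y in Ω, |lam y|) ≤ κ * (W x₀ * U) := by
    gcongr; exact hW.2.1 x₀ hx₀
  rw [le_div_iff₀ (by linarith)]
  calc W x * (1 - κ * U) ≤ W x₀ * (1 - κ * U) :=
        mul_le_mul_of_nonneg_right (hmax hx) (by linarith)
    _ ≤ κ * ∫ y in Ω, φ y := by linear_combination hx₀max + hWU

theorem omegaOf_mem_Icc {wU Glow : ℝ} (hμ : 0 ≤ μ) (hGlow : 0 < Glow) {x : Fin n → ℝ}
    (hW : W x ∈ Icc 0 wU) (hG : Glow ≤ priceIndex Ω F σ T lam x) :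
    omegaOf Ω F σ μ T lam W x ∈ Icc 0 (wU * Glow ^ (-μ)) := by
  have hGx : 0 < priceIndex Ω F σ T lam x := hGlow.trans_le hG
  exact ⟨mul_nonneg hW.1 (rpow_nonneg hGx.le _),
    mul_le_mul hW.2 (rpow_le_rpow_of_nonpos hGlow hG (neg_nonpos.2 hμ)) (rpow_nonneg hGx.le _)
      (hW.1.trans hW.2)⟩

theorem integral_abs_psiOf_le {Λ v ωU U : ℝ} (hΩ : MeasurableSet Ω) (hv : 0 ≤ v) (hΛ : 0 < Λ)
    (hωU : 0 ≤ ωU) (hlam : IntegrableOn lam Ω)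
    (hω : ∀ x ∈ Ω, omegaOf Ω F σ μ T lam W x ∈ Icc 0 ωU) (hU : ∫ x in Ω, |lam x| ≤ U) :
    ∫ x in Ω, |psiOf Ω F σ μ Λ v T lam W x| ≤ v * ωU * U * (1 + U / Λ) := by
  have habs_ω : ∀ x ∈ Ω, |omegaOf Ω F σ μ T lam W x| ≤ ωU := fun x hx =>
    abs_le.2 ⟨by linarith [(hω x hx).1], (hω x hx).2⟩
  have hU0 : 0 ≤ U := (integral_nonneg fun x => abs_nonneg (lam x)).trans hU
  have havg : |1 / Λ * ∫ y in Ω, omegaOf Ω F σ μ T lam W y * lam y| ≤ ωU * U / Λ := by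
    have hint : ∫ y in Ω, |omegaOf Ω F σ μ T lam W y * lam y| ≤ ωU * ∫ y in Ω, |lam y| :=
      integral_le_mul_integral_of_ae_le (ae_of_all _ fun y => abs_nonneg _) hlam.abs <| by
        filter_upwards [ae_restrict_mem hΩ] with y hy
        rw [abs_mul]; gcongr; exact habs_ω y hy
    rw [abs_mul, abs_of_pos (one_div_pos.2 hΛ), one_div_mul_eq_div]
    gcongr
    exact abs_integral_le_integral_abs.trans (hint.trans (by gcongr))
  have hpsi : ∫ x in Ω, |psiOf Ω F σ μ Λ v T lam W x| ≤
      v * (ωU + ωU * U / Λ) * ∫ x in Ω, |lam x| :=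
    integral_le_mul_integral_of_ae_le (ae_of_all _ fun y => abs_nonneg _) hlam.abs <| by
      filter_upwards [ae_restrict_mem hΩ] with x hx
      rw [psiOf, abs_mul, abs_mul, abs_of_nonneg hv]
      gcongr
      exact (abs_sub _ _).trans (add_le_add (habs_ω x hx) havg)
  calc _ ≤ v * (ωU + ωU * U / Λ) * U := hpsi.trans (by gcongr)
    _ = v * ωU * U * (1 + U / Λ) := by ring

end Model

theorem psi_bounded {n : ℕ} (Ω : Set (Fin n → ℝ))
    (hΩc : IsCompact Ω) (hΩpos : 0 < volume Ω)
    (T : (Fin n → ℝ) → (Fin n → ℝ) → ℝ)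
    (hTcont : ContinuousOn (fun p : (Fin n → ℝ) × (Fin n → ℝ) => T p.1 p.2) (Ω ×ˢ Ω))
    (Tmin Tmax : ℝ) (hTmin : 1 ≤ Tmin)
    (hT : ∀ x ∈ Ω, ∀ y ∈ Ω, T x y ∈ Icc Tmin Tmax)
    (σ μ F v Λ Φ : ℝ) (hσ : 1 < σ) (hμ : μ ∈ Ioo (0 : ℝ) 1) (hF : 0 < F)
    (hv : 0 < v) (hΛ : 0 < Λ) (hΦ : 0 < Φ)
    (φ : (Fin n → ℝ) → ℝ) (hφint : IntegrableOn φ Ω)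
    (hφ0 : ∀ᵐ x ∂(volume.restrict Ω), 0 ≤ φ x) (hφΦ : (∫ x in Ω, φ x) = Φ)
    (b : ℝ) (hb : 0 < b) (hbΛ : b < Λ)
    (hcond : μ / σ * (Tmax / Tmin) ^ (σ - 1) * ((Λ + b) / (Λ - b)) < 1)
    (wU Glow ωU K : ℝ)
    (hwU : wU = (μ / σ * (Tmax / Tmin) ^ (σ - 1) * (Φ / (Λ - b))) /
      (1 - μ / σ * (Tmax / Tmin) ^ (σ - 1) * ((Λ + b) / (Λ - b))))
    (hGL : Glow = F ^ (1 / (σ - 1)) * Tmin * (Λ + b) ^ (1 / (1 - σ)))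
    (hωU : ωU = wU * Glow ^ (-μ))
    (hK : K = v * ωU * (Λ + b) * (1 + (Λ + b) / Λ)) :
    0 < K ∧
    ∀ lam₀ : (Fin n → ℝ) → ℝ, IntegrableOn lam₀ Ω →
      (∀ᵐ x ∂(volume.restrict Ω), 0 ≤ lam₀ x) → (∫ x in Ω, lam₀ x) = Λ →
      ∀ lam : (Fin n → ℝ) → ℝ, IntegrableOn lam Ω →
        (∫ x in Ω, |lam x - lam₀ x|) ≤ b →
        ∀ W : (Fin n → ℝ) → ℝ, IsWageSolution Ω F σ μ T φ lam W →
          (∫ x in Ω, |psiOf Ω F σ μ Λ v T lam W x|) ≤ K := by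
  obtain ⟨z, hz⟩ := nonempty_of_measure_ne_zero hΩpos.ne'
  have hTmin0 : 0 < Tmin := by linarith
  have hTmax0 : 0 < Tmax := hTmin0.trans_le ((hT z hz z hz).1.trans (hT z hz z hz).2)
  have hΛb : 0 < Λ - b := by linarith
  have hwU0 : 0 < wU := hwU ▸ div_pos (by have := hμ.1; positivity) (by linarith)
  have hGlow0 : 0 < Glow := by rw [hGL]; positivity
  have hωU0 : 0 < ωU := by rw [hωU]; positivity
  refine ⟨by rw [hK]; positivity, fun lam₀ hlam₀ hlam₀0 hlam₀Λ lam hlam hdist W hW => ?_⟩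
  have hI := integral_abs_mem_Icc_of_integral_abs_sub_le hlam hlam₀ hlam₀0 hlam₀Λ hdist
  have hG := fun x (hx : x ∈ Ω) => hGL ▸ priceIndex_bounds hΩc hTcont hTmin0 hT hF hσ hΛb hlam hI hx
  have hκ : μ / (σ * F) * (F * (Tmax / Tmin) ^ (σ - 1) / (Λ - b)) =
      μ / σ * (Tmax / Tmin) ^ (σ - 1) / (Λ - b) := by
    field_simp
  have hWle : ∀ x ∈ Ω, W x ≤ wU := fun x hx => by
    refine (hW.le_div_one_sub hΩc (by have := hμ.1; positivity) hφint hφ0 hlam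
      (fun x hx y hy => priceIndex_rpow_mul_rpow_mem_Icc hTmin0 hTmax0.le hσ.le hF.le hΛb.le
        (hGlow0.trans_le (hG y hy).1).le (hG y hy).2 (hT x hx y hy).1) hI.2 ?_ hx).trans_eq ?_
    · rw [hκ]; convert hcond using 1; ring
    · rw [hκ, hφΦ, hwU]; ring
  have hω : ∀ x ∈ Ω, omegaOf Ω F σ μ T lam W x ∈ Icc 0 ωU := fun x hx =>
    hωU ▸ omegaOf_mem_Icc hμ.1.le hGlow0 ⟨hW.2.1 x hx, hWle x hx⟩ (hG x hx).1
  exact (integral_abs_psiOf_le hΩc.measurableSet hv.le hΛ hωU0.le hlam hω hI.2).trans_eq hK.symm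
end

section
/- Let 0 < b < Λ and let λ₁, λ₂ ∈ L¹(Ω) satisfy Λ − b ≤ ‖λᵢ‖_{L¹} ≤ Λ + b for i = 1, 2. Then ‖G[λ₁] − G[λ₂]‖_∞ ≤ L_G · ‖λ₁ − λ₂‖_{L¹}, where L_G := (1/(σ−1))·F^{1/(σ−1)}·T_max^{σ}·T_min^{1−σ}·(Λ−b)^{σ/(1−σ)}. -/
/-!
Write `I(x) = (1/F) ∫_Ω |λ(y)| T(x,y)^{1-σ} dy`, so that `G[λ](x) = I(x)^{1/(1-σ)}`. Since
`T^{1-σ}` lies between `Tmax^{1-σ}` and `Tmin^{1-σ}`, the lower mass bound gives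
`I(x) ≥ m := (Λ-b) Tmax^{1-σ} / F` for both densities, while
`|I₁(x) - I₂(x)| ≤ Tmin^{1-σ} ‖λ₁ - λ₂‖_{L¹} / F`. On `[m, ∞)` the map `t ↦ t^{1/(1-σ)}` is
Lipschitz with constant `m^{σ/(1-σ)}/(σ-1)` by the mean value theorem, and the product of the
two constants is `L_G`.
-/

open MeasureTheory Real Set

/-- Sup norm of `f` over the region `Ω`. -/
noncomputable def supNormOn {n : ℕ} (Ω : Set (Fin n → ℝ)) (f : (Fin n → ℝ) → ℝ) : ℝ :=
  sSup ((fun x => |f x|) '' Ω)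

theorem abs_rpow_sub_rpow_le_of_le_one {m q a b : ℝ} (hm : 0 < m) (hq : q ≤ 1)
    (ha : m ≤ a) (hb : m ≤ b) : |a ^ q - b ^ q| ≤ |q| * m ^ (q - 1) * |a - b| := by
  have hderiv : ∀ t ∈ Ici m, HasDerivWithinAt (fun t => t ^ q) (q * t ^ (q - 1)) (Ici m) t :=
    fun t ht => (hasDerivAt_rpow_const (Or.inl (hm.trans_le ht).ne')).hasDerivWithinAt
  have hbound : ∀ t ∈ Ici m, ‖q * t ^ (q - 1)‖ ≤ |q| * m ^ (q - 1) := fun t ht => by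
    rw [norm_mul, Real.norm_eq_abs, norm_of_nonneg (rpow_nonneg (hm.trans_le ht).le _)]
    exact mul_le_mul_of_nonneg_left (rpow_le_rpow_of_nonpos hm ht (by linarith)) (abs_nonneg q)
  simpa only [Real.norm_eq_abs] using
    (convex_Ici m).norm_image_sub_le_of_norm_hasDerivWithin_le hderiv hbound hb ha

section WeightedIntegral

variable {α : Type*} [MeasurableSpace α] {μ : Measure α} {s : Set α} {f g w : α → ℝ} {c : ℝ}

theorem IntegrableOn.abs_mul_of_abs_le (hf : IntegrableOn f s μ) (hs : MeasurableSet s)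
    (hw : AEStronglyMeasurable w (μ.restrict s)) (hwc : ∀ y ∈ s, |w y| ≤ c) :
    IntegrableOn (fun y => |f y| * w y) s μ :=
  hf.abs.mul_bdd hw (ae_restrict_of_forall_mem hs hwc)

theorem mul_setIntegral_abs_le_setIntegral_abs_mul (hs : MeasurableSet s)
    (hf : IntegrableOn f s μ) (hfw : IntegrableOn (fun y => |f y| * w y) s μ)
    (hcw : ∀ y ∈ s, c ≤ w y) : c * ∫ y in s, |f y| ∂μ ≤ ∫ y in s, |f y| * w y ∂μ := by
  rw [← integral_const_mul]
  refine setIntegral_mono_on (hf.abs.const_mul c) hfw hs fun y hy => ?_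
  rw [mul_comm]
  exact mul_le_mul_of_nonneg_left (hcw y hy) (abs_nonneg _)

theorem abs_setIntegral_abs_mul_sub_le (hs : MeasurableSet s) (hf : IntegrableOn f s μ)
    (hg : IntegrableOn g s μ) (hw : AEStronglyMeasurable w (μ.restrict s))
    (hw0 : ∀ y ∈ s, 0 ≤ w y) (hwc : ∀ y ∈ s, w y ≤ c) :
    |∫ y in s, |f y| * w y ∂μ - ∫ y in s, |g y| * w y ∂μ| ≤ c * ∫ y in s, |f y - g y| ∂μ := by
  have habs : ∀ y ∈ s, |w y| ≤ c := fun y hy => (abs_of_nonneg (hw0 y hy)).trans_le (hwc y hy)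
  rw [← integral_sub (IntegrableOn.abs_mul_of_abs_le hf hs hw habs)
    (IntegrableOn.abs_mul_of_abs_le hg hs hw habs), ← integral_const_mul]
  refine norm_integral_le_of_norm_le (f := fun y => |f y| * w y - |g y| * w y)
    ((hf.sub hg).abs.const_mul c) (ae_restrict_of_forall_mem hs fun y hy => ?_)
  rw [← sub_mul, norm_mul, Real.norm_eq_abs, Real.norm_eq_abs, abs_of_nonneg (hw0 y hy),
    mul_comm c]
  exact mul_le_mul (abs_abs_sub_abs_le_abs_sub _ _) (hwc y hy) (hw0 y hy) (abs_nonneg _)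

end WeightedIntegral

theorem priceIndex_lipschitz_const_eq {σ F Tmin Tmax a : ℝ} (hσ : 1 < σ) (hF : 0 < F)
    (hTmax : 0 < Tmax) (ha : 0 < a) :
    |1 / (1 - σ)| * ((1 / F) * (a * Tmax ^ (1 - σ))) ^ (1 / (1 - σ) - 1) *
        ((1 / F) * Tmin ^ (1 - σ)) =
      (1 / (σ - 1)) * F ^ (1 / (σ - 1)) * Tmax ^ σ * Tmin ^ (1 - σ) * a ^ (σ / (1 - σ)) := by
  have hσ' : 1 - σ ≠ 0 := by linarith
  have hσ'' : σ - 1 ≠ 0 := by linarith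
  have habs : |1 / (1 - σ)| = 1 / (σ - 1) := by
    rw [abs_of_neg (one_div_neg.2 (by linarith)), ← one_div_neg_eq_neg_one_div, neg_sub]
  have hexp : 1 / (1 - σ) - 1 = σ / (1 - σ) := by field_simp; ring
  have hmass : ((1 / F) * (a * Tmax ^ (1 - σ))) ^ (σ / (1 - σ)) =
      (1 / F) ^ (σ / (1 - σ)) * (a ^ (σ / (1 - σ)) * Tmax ^ σ) := by
    rw [mul_rpow (by positivity) (by positivity), mul_rpow ha.le (by positivity),
      ← rpow_mul hTmax.le, mul_div_cancel₀ σ hσ']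
  have hF_pow : (1 / F) ^ (σ / (1 - σ)) * (1 / F) = F ^ (1 / (σ - 1)) := by
    rw [← rpow_add_one (by positivity), one_div, inv_rpow hF.le, ← rpow_neg hF.le]
    congr 1
    field_simp
    ring
  rw [habs, hexp, hmass, ← hF_pow]
  ring

theorem abs_priceIndex_sub_le {n : ℕ} {Ω : Set (Fin n → ℝ)} (hΩ : MeasurableSet Ω)
    {T : (Fin n → ℝ) → (Fin n → ℝ) → ℝ} {x : Fin n → ℝ} (hx : x ∈ Ω)
    (hTx_cont : ContinuousOn (T x) Ω) {Tmin Tmax : ℝ} (hTmin : 0 < Tmin)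
    (hTx : ∀ y ∈ Ω, T x y ∈ Icc Tmin Tmax) {σ F a : ℝ} (hσ : 1 < σ) (hF : 0 < F) (ha : 0 < a)
    {lam₁ lam₂ : (Fin n → ℝ) → ℝ} (hlam₁ : IntegrableOn lam₁ Ω) (hlam₂ : IntegrableOn lam₂ Ω)
    (h₁ : a ≤ ∫ y in Ω, |lam₁ y|) (h₂ : a ≤ ∫ y in Ω, |lam₂ y|) :
    |priceIndex Ω F σ T lam₁ x - priceIndex Ω F σ T lam₂ x| ≤
      (1 / (σ - 1)) * F ^ (1 / (σ - 1)) * Tmax ^ σ * Tmin ^ (1 - σ) * a ^ (σ / (1 - σ)) *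
        ∫ y in Ω, |lam₁ y - lam₂ y| := by
  have hTpos : ∀ y ∈ Ω, 0 < T x y := fun y hy => hTmin.trans_le (hTx y hy).1
  have hTmax : 0 < Tmax := (hTpos x hx).trans_le (hTx x hx).2
  have hw0 : ∀ y ∈ Ω, 0 ≤ T x y ^ (1 - σ) := fun y hy => rpow_nonneg (hTpos y hy).le _
  have hw_le : ∀ y ∈ Ω, T x y ^ (1 - σ) ≤ Tmin ^ (1 - σ) := fun y hy =>
    rpow_le_rpow_of_nonpos hTmin (hTx y hy).1 (by linarith)
  have hw_ge : ∀ y ∈ Ω, Tmax ^ (1 - σ) ≤ T x y ^ (1 - σ) := fun y hy =>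
    rpow_le_rpow_of_nonpos (hTpos y hy) (hTx y hy).2 (by linarith)
  have hw : AEStronglyMeasurable (fun y => T x y ^ (1 - σ)) (volume.restrict Ω) :=
    (hTx_cont.rpow_const fun y hy => Or.inl (hTpos y hy).ne').aestronglyMeasurable hΩ
  set m := (1 / F) * (a * Tmax ^ (1 - σ))
  have hm : 0 < m := by positivity
  have hmass : ∀ lam : (Fin n → ℝ) → ℝ, IntegrableOn lam Ω → a ≤ ∫ y in Ω, |lam y| →
      m ≤ (1 / F) * ∫ y in Ω, |lam y| * T x y ^ (1 - σ) := fun lam hlam hl => by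
    refine mul_le_mul_of_nonneg_left ?_ (by positivity)
    calc a * Tmax ^ (1 - σ) ≤ Tmax ^ (1 - σ) * ∫ y in Ω, |lam y| := by
          rw [mul_comm]; exact mul_le_mul_of_nonneg_left hl (by positivity)
      _ ≤ _ := mul_setIntegral_abs_le_setIntegral_abs_mul hΩ hlam
          (IntegrableOn.abs_mul_of_abs_le hlam hΩ hw fun y hy =>
            (abs_of_nonneg (hw0 y hy)).trans_le (hw_le y hy)) hw_ge
  calc _ ≤ |1 / (1 - σ)| * m ^ (1 / (1 - σ) - 1) *
        |(1 / F) * (∫ y in Ω, |lam₁ y| * T x y ^ (1 - σ)) -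
          (1 / F) * ∫ y in Ω, |lam₂ y| * T x y ^ (1 - σ)| :=
        abs_rpow_sub_rpow_le_of_le_one hm
          ((one_div_neg.2 (by linarith)).le.trans zero_le_one)
          (hmass lam₁ hlam₁ h₁) (hmass lam₂ hlam₂ h₂)
    _ ≤ |1 / (1 - σ)| * m ^ (1 / (1 - σ) - 1) *
        ((1 / F) * Tmin ^ (1 - σ) * ∫ y in Ω, |lam₁ y - lam₂ y|) := by
      rw [← mul_sub, abs_mul, abs_of_pos (one_div_pos.2 hF), mul_assoc (1 / F)]
      refine mul_le_mul_of_nonneg_left ?_ (mul_nonneg (abs_nonneg _) (rpow_nonneg hm.le _))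
      exact mul_le_mul_of_nonneg_left
        (abs_setIntegral_abs_mul_sub_le hΩ hlam₁ hlam₂ hw hw0 hw_le) (by positivity)
    _ = _ := by rw [← priceIndex_lipschitz_const_eq hσ hF hTmax ha]; ring

theorem priceIndex_lipschitz_general {n : ℕ} (Ω : Set (Fin n → ℝ))
    (hΩc : IsCompact Ω) (hΩpos : 0 < volume Ω)
    (T : (Fin n → ℝ) → (Fin n → ℝ) → ℝ)
    (hTcont : ContinuousOn (fun p : (Fin n → ℝ) × (Fin n → ℝ) => T p.1 p.2) (Ω ×ˢ Ω))
    (Tmin Tmax : ℝ) (hTmin : 1 ≤ Tmin)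
    (hT : ∀ x ∈ Ω, ∀ y ∈ Ω, T x y ∈ Icc Tmin Tmax)
    (σ F Λ : ℝ) (hσ : 1 < σ) (hF : 0 < F)
    (b : ℝ) (hbΛ : b < Λ)
    (lam₁ lam₂ : (Fin n → ℝ) → ℝ)
    (hlam₁ : IntegrableOn lam₁ Ω) (hlam₂ : IntegrableOn lam₂ Ω)
    (h₁l : Λ - b ≤ ∫ x in Ω, |lam₁ x|)
    (h₂l : Λ - b ≤ ∫ x in Ω, |lam₂ x|) :
    supNormOn Ω (fun x => priceIndex Ω F σ T lam₁ x - priceIndex Ω F σ T lam₂ x) ≤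
      (1 / (σ - 1)) * F ^ (1 / (σ - 1)) * Tmax ^ σ * Tmin ^ (1 - σ) *
          (Λ - b) ^ (σ / (1 - σ)) *
        ∫ x in Ω, |lam₁ x - lam₂ x| := by
  have hpointwise : ∀ x ∈ Ω, |priceIndex Ω F σ T lam₁ x - priceIndex Ω F σ T lam₂ x| ≤
      (1 / (σ - 1)) * F ^ (1 / (σ - 1)) * Tmax ^ σ * Tmin ^ (1 - σ) *
          (Λ - b) ^ (σ / (1 - σ)) * ∫ x in Ω, |lam₁ x - lam₂ x| := fun x hx =>
    abs_priceIndex_sub_le hΩc.measurableSet hx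
      (hTcont.comp (Continuous.prodMk_right x).continuousOn fun _ hy => ⟨hx, hy⟩)
      (zero_lt_one.trans_le hTmin) (hT x hx) hσ hF (sub_pos.2 hbΛ) hlam₁ hlam₂ h₁l h₂l
  obtain ⟨x₀, hx₀⟩ := nonempty_of_measure_ne_zero hΩpos.ne'
  exact Real.sSup_le (forall_mem_image.2 hpointwise)
    ((abs_nonneg _).trans (hpointwise x₀ hx₀))

theorem priceIndex_lipschitz {n : ℕ} (Ω : Set (Fin n → ℝ))
    (hΩc : IsCompact Ω) (hΩpos : 0 < volume Ω)
    (T : (Fin n → ℝ) → (Fin n → ℝ) → ℝ)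
    (hTcont : ContinuousOn (fun p : (Fin n → ℝ) × (Fin n → ℝ) => T p.1 p.2) (Ω ×ˢ Ω))
    (Tmin Tmax : ℝ) (hTmin : 1 ≤ Tmin)
    (hT : ∀ x ∈ Ω, ∀ y ∈ Ω, T x y ∈ Icc Tmin Tmax)
    (σ F Λ : ℝ) (hσ : 1 < σ) (hF : 0 < F) (hΛ : 0 < Λ)
    (b : ℝ) (hb : 0 < b) (hbΛ : b < Λ)
    (lam₁ lam₂ : (Fin n → ℝ) → ℝ)
    (hlam₁ : IntegrableOn lam₁ Ω) (hlam₂ : IntegrableOn lam₂ Ω)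
    (h₁l : Λ - b ≤ ∫ x in Ω, |lam₁ x|) (h₁u : (∫ x in Ω, |lam₁ x|) ≤ Λ + b)
    (h₂l : Λ - b ≤ ∫ x in Ω, |lam₂ x|) (h₂u : (∫ x in Ω, |lam₂ x|) ≤ Λ + b) :
    supNormOn Ω (fun x => priceIndex Ω F σ T lam₁ x - priceIndex Ω F σ T lam₂ x) ≤
      (1 / (σ - 1)) * F ^ (1 / (σ - 1)) * Tmax ^ σ * Tmin ^ (1 - σ) *
          (Λ - b) ^ (σ / (1 - σ)) *
        ∫ x in Ω, |lam₁ x - lam₂ x| :=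
  priceIndex_lipschitz_general Ω hΩc hΩpos T hTcont Tmin Tmax hTmin hT σ F Λ hσ hF b hbΛ lam₁ lam₂
    hlam₁ hlam₂ h₁l h₂l
end

section
/- For all α > 0, ρ > 0, θ ∈ [−π, π] and every integer k, ∫_{−π}^{π} e^{ikθ′}·exp(−α·ρ·min(|θ − θ′|, 2π − |θ − θ′|))·ρ dθ′ = E_k·e^{ikθ}, where E_k := 2αρ²(1 − (−1)^{|k|}·e^{−αρπ}) / (k² + α²ρ²). -/
/-!
The min-formula is the geodesic distance `‖θ' - θ‖` on `AddCircle (2 * π)`, so the kernel is a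
`2π`-periodic function of `θ' - θ`. Translating by `θ` and using periodicity, the integral becomes
`e^{ikθ}` times the `k`-th Fourier coefficient of `e^{-αρ|s|}` on `[-π, π]`; splitting at `0`, this
coefficient is a sum of two integrals of `e^{(±ik - αρ)s}` over `[0, π]`, where `e^{±ikπ} = (-1)^k`.
-/

open Real Complex

theorem AddCircle.norm_coe_eq_min_abs {p x : ℝ} (hx : |x| ≤ p) :
    ‖(x : AddCircle p)‖ = min |x| (p - |x|) := by
  rcases (abs_nonneg x).trans hx |>.eq_or_lt with rfl | hp
  · simp_all
  have hnorm (y : ℝ) (hy : |y| ≤ p / 2) : ‖(y : AddCircle p)‖ = |y| :=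
    (norm_coe_eq_abs_iff p hp.ne').2 (by rwa [abs_of_pos hp])
  rcases le_or_gt |x| (p / 2) with hx' | hx'
  · rw [hnorm x hx', min_eq_left (by linarith)]
  rw [min_eq_right (by linarith)]
  rcases le_or_gt 0 x with h0 | h0
  · rw [abs_of_nonneg h0] at hx hx' ⊢
    rw [← sub_add_cancel x p, coe_add_period, hnorm _ (by rw [abs_le]; constructor <;> linarith),
      abs_of_nonpos (by linarith)]
    ring
  · rw [abs_of_neg h0] at hx hx' ⊢
    rw [← coe_add_period, hnorm _ (by rw [abs_le]; constructor <;> linarith),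
      abs_of_nonneg (by linarith)]
    ring

theorem exp_I_mul_int_mul_pi (k : ℤ) : exp (I * k * π) = ((-1 : ℝ) ^ |k| : ℝ) := by
  rw [show I * k * π = k * (π * I) by ring, exp_int_mul, exp_pi_mul_I]
  push_cast
  simp [neg_one_zpow_eq_ite, even_abs]

theorem I_mul_int_sub_ofReal_ne_zero (k : ℤ) {a : ℝ} (ha : a ≠ 0) : I * k - a ≠ 0 :=
  fun h => ha (by simpa using congrArg re h)

theorem integral_exp_I_mul_int_mul_exp_neg_mul (k : ℤ) {a : ℝ} (ha : a ≠ 0) :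
    ∫ s in (0)..π, exp (I * k * s) * (Real.exp (-(a * s)) : ℂ) =
      (((-1 : ℝ) ^ |k| * Real.exp (-(a * π)) : ℝ) - 1) / (I * k - a) := by
  have hexp (s : ℝ) : exp (I * k * s) * (Real.exp (-(a * s)) : ℂ) = exp ((I * k - a) * s) := by
    push_cast
    rw [← Complex.exp_add]
    ring_nf
  simp_rw [hexp]
  rw [integral_exp_mul_complex (I_mul_int_sub_ofReal_ne_zero k ha), sub_mul, Complex.exp_sub,
    exp_I_mul_int_mul_pi]
  push_cast
  simp [div_eq_mul_inv, Complex.exp_neg]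

theorem integral_exp_I_mul_int_mul_exp_neg_abs (k : ℤ) {a : ℝ} (ha : a ≠ 0) :
    ∫ s in (-π)..π, exp (I * k * s) * (Real.exp (-(a * |s|)) : ℂ) =
      ((2 * a * (1 - (-1 : ℝ) ^ |k| * Real.exp (-(a * π)))) / (k ^ 2 + a ^ 2) : ℝ) := by
  have hcont : Continuous fun s : ℝ => exp (I * k * s) * (Real.exp (-(a * |s|)) : ℂ) := by
    fun_prop
  have hneg : ∫ s in (-π)..0, exp (I * k * s) * (Real.exp (-(a * |s|)) : ℂ) =
      ∫ s in (0)..π, exp (I * ↑(-k) * s) * (Real.exp (-(a * s)) : ℂ) := by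
    rw [← neg_zero, ← intervalIntegral.integral_comp_neg, neg_zero]
    refine intervalIntegral.integral_congr fun s hs => ?_
    rw [Set.uIcc_of_le pi_pos.le] at hs
    simp [abs_of_nonneg hs.1]
  have hpos : ∫ s in (0)..π, exp (I * k * s) * (Real.exp (-(a * |s|)) : ℂ) =
      ∫ s in (0)..π, exp (I * k * s) * (Real.exp (-(a * s)) : ℂ) := by
    refine intervalIntegral.integral_congr fun s hs => ?_
    rw [Set.uIcc_of_le pi_pos.le] at hs
    simp [abs_of_nonneg hs.1]
  rw [← intervalIntegral.integral_add_adjacent_intervals (hcont.intervalIntegrable _ 0)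
    (hcont.intervalIntegrable 0 _), hneg, hpos, integral_exp_I_mul_int_mul_exp_neg_mul _ ha,
    integral_exp_I_mul_int_mul_exp_neg_mul _ ha, abs_neg]
  have h₁ := I_mul_int_sub_ofReal_ne_zero k ha
  have h₂ := I_mul_int_sub_ofReal_ne_zero (-k) ha
  have hden : ((k ^ 2 + a ^ 2 : ℝ) : ℂ) ≠ 0 := ofReal_ne_zero.2 (by positivity)
  generalize (-1 : ℝ) ^ |k| * Real.exp (-(a * π)) = c
  rw [div_add_div _ _ h₂ h₁, ofReal_div, div_eq_div_iff (mul_ne_zero h₂ h₁) hden]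
  push_cast
  linear_combination (-2 * a * (c - 1) * k ^ 2 : ℂ) * I_sq

theorem integral_exp_I_mul_int_mul_exp_neg_mul_norm_addCircle (k : ℤ) {a : ℝ} (ha : a ≠ 0) :
    ∫ s in (-π)..π, exp (I * k * s) * (Real.exp (-(a * ‖(s : AddCircle (2 * π))‖)) : ℂ) =
      ((2 * a * (1 - (-1 : ℝ) ^ |k| * Real.exp (-(a * π)))) / (k ^ 2 + a ^ 2) : ℝ) := by
  rw [← integral_exp_I_mul_int_mul_exp_neg_abs k ha]
  refine intervalIntegral.integral_congr fun s hs => ?_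
  rw [Set.uIcc_of_le (by linarith [pi_pos])] at hs
  have hs' : |s| ≤ |2 * π| / 2 := by
    rw [abs_of_pos two_pi_pos, abs_le]
    constructor <;> linarith [hs.1, hs.2]
  rw [(AddCircle.norm_coe_eq_abs_iff _ two_pi_pos.ne').2 hs']

theorem periodic_exp_I_mul_int_mul (k : ℤ) :
    Function.Periodic (fun x : ℝ => exp (I * k * x)) (2 * π) := by
  intro x
  simp only [ofReal_add, ofReal_mul, ofReal_ofNat]
  rw [show I * k * (x + 2 * π) = I * k * x + k * (2 * π * I) by ring, Complex.exp_add,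
    exp_int_mul_two_pi_mul_I, mul_one]

theorem integral_exp_I_mul_int_mul_mul_comp_sub {K : ℝ → ℂ} (hK : Function.Periodic K (2 * π))
    (k : ℤ) (θ : ℝ) :
    ∫ θ' in (-π)..π, exp (I * k * θ') * K (θ' - θ) =
      (∫ s in (-π)..π, exp (I * k * s) * K s) * exp (I * k * θ) := by
  have hshift (θ' : ℝ) : exp (I * k * θ') * K (θ' - θ) =
      exp (I * k * ↑(θ' - θ)) * K (θ' - θ) * exp (I * k * θ) := by
    rw [mul_right_comm _ (K _), ← Complex.exp_add]
    congr 2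
    push_cast
    ring
  have hper : Function.Periodic (fun s : ℝ => exp (I * k * s) * K s) (2 * π) :=
    (periodic_exp_I_mul_int_mul k).mul hK
  simp_rw [hshift]
  rw [intervalIntegral.integral_mul_const, intervalIntegral.integral_comp_sub_right
    (fun s => exp (I * k * s) * K s)]
  congr 1
  convert hper.intervalIntegral_add_eq (-π - θ) (-π) using 2 <;> ring

theorem circle_mode_convolution (α ρ θ : ℝ) (k : ℤ) (hα : 0 < α) (hρ : 0 < ρ)
    (hθ : θ ∈ Set.Icc (-π) π) :
    (∫ θ' in (-π)..π,
        Complex.exp (Complex.I * (k : ℂ) * (θ' : ℂ)) *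
          ((Real.exp (-(α * (ρ * min |θ - θ'| (2 * π - |θ - θ'|)))) * ρ : ℝ) : ℂ))
      = (((2 * α * ρ ^ 2 * (1 - (-1 : ℝ) ^ |k| * Real.exp (-(α * ρ * π)))) /
            ((k : ℝ) ^ 2 + α ^ 2 * ρ ^ 2) : ℝ) : ℂ) *
          Complex.exp (Complex.I * (k : ℂ) * (θ : ℂ)) := by
  set K : ℝ → ℂ := fun s => Real.exp (-(α * ρ * ‖(s : AddCircle (2 * π))‖))
  have hK : Function.Periodic K (2 * π) := fun s => by simp [K]
  have hkernel : ∀ θ' ∈ Set.uIcc (-π) π,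
      exp (I * k * θ') * ((Real.exp (-(α * (ρ * min |θ - θ'| (2 * π - |θ - θ'|)))) * ρ : ℝ) : ℂ) =
        ρ * (exp (I * k * θ') * K (θ' - θ)) := by
    intro θ' hθ'
    rw [Set.uIcc_of_le (by linarith [pi_pos])] at hθ'
    have hdist : |θ' - θ| ≤ 2 * π := by
      rw [abs_le]; constructor <;> linarith [hθ.1, hθ.2, hθ'.1, hθ'.2]
    simp only [K, AddCircle.norm_coe_eq_min_abs hdist, abs_sub_comm θ' θ, ← mul_assoc α ρ]
    push_cast
    ring
  rw [intervalIntegral.integral_congr hkernel, intervalIntegral.integral_const_mul,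
    integral_exp_I_mul_int_mul_mul_comp_sub hK,
    integral_exp_I_mul_int_mul_exp_neg_mul_norm_addCircle k (mul_pos hα hρ).ne']
  push_cast
  ring
end

section
/- Let σ > 1, μ ∈ (0,1), F > 0, τ > 0, ρ > 0, Λ > 0, Φ > 0, and set α := τ(σ−1), λ̄ := Λ/(2πρ), φ̄ := Φ/(2πρ), Ḡ := [2λ̄(1 − e^{−αρπ})/(Fα)]^{1/(1−σ)}, w̄ := (μφ̄/(σλ̄))/(1 − μ/σ), and Ȳ := w̄λ̄ + φ̄. Then the constant functions λ ≡ λ̄, G ≡ Ḡ, w ≡ w̄ solve the instantaneous equilibrium equations on the circle of radius ρ: for all θ ∈ [−π,π], Ḡ = [(1/F)∫_{−π}^{π} λ̄·e^{−α d(ρθ,ρθ′)} ρ dθ′]^{1/(1−σ)} and w̄ = (μ/(σF))∫_{−π}^{π} Ȳ·Ḡ^{σ−1}·e^{−α d(ρθ,ρθ′)} ρ dθ′; moreover w̄ ≥ 0, Ḡ ≥ 0, Ȳ ≥ 0, and the real wage ω ≡ w̄·Ḡ^{−μ} is constant, so that λ ≡ λ̄ is a stationary solution of the migration dynamics ∂λ/∂t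 = v[ω − (1/Λ)∫ ωλ]λ. -/
open Real

/-- Distance on the circle of radius `ρ` between the points with angles `θ` and `θ'`. -/
noncomputable def dCirc (ρ θ θ' : ℝ) : ℝ := ρ * min |θ - θ'| (2 * π - |θ - θ'|)

/-!
The kernel `θ' ↦ e^{-α d(ρθ, ρθ')}` is a function of `θ - θ'` that is `2π`-periodic on the range
where it is used, so its integral over a full turn does not depend on `θ`; at `θ = 0` it is
`∫_{-π}^{π} e^{-αρ|u|} du = 2(1 - e^{-αρπ})/(αρ)`. With constant densities both equilibrium
equations therefore collapse to scalar identities: the one for `Ḡ` is its definition, and the one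
for `w̄` says that `w̄` is the fixed point of `w ↦ μ(wλ̄ + φ̄)/(σλ̄)`. A constant real wage equals
its population-weighted average, so the migration term vanishes.
-/

open Set intervalIntegral

theorem intervalIntegral_shift_eq_of_periodicOn {E : Type*} [NormedAddCommGroup E]
    [NormedSpace ℝ E] {f : ℝ → E} {a c T : ℝ}
    (hf : ∀ x y, IntervalIntegrable f MeasureTheory.volume x y)
    (hper : ∀ u ∈ uIcc a (a + c), f (u + T) = f u) :
    ∫ x in a + c..a + c + T, f x = ∫ x in a..a + T, f x := by
  have htail : ∫ x in a + T..a + c + T, f x = ∫ x in a..a + c, f x := by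
    rw [← integral_comp_add_right]
    exact integral_congr hper
  calc ∫ x in a + c..a + c + T, f x
      = (∫ x in a + c..a + T, f x) + ∫ x in a + T..a + c + T, f x :=
        (integral_add_adjacent_intervals (hf _ _) (hf _ _)).symm
    _ = (∫ x in a..a + c, f x) + ∫ x in a + c..a + T, f x := by rw [htail, add_comm]
    _ = ∫ x in a..a + T, f x := integral_add_adjacent_intervals (hf _ _) (hf _ _)

/-- Arc-length distance from angle `0` to angle `u` on the unit circle, valid for
`u ∈ [-2π, 2π]`; `dCirc ρ θ θ'` is `ρ * arcDist (θ - θ')` by definition. -/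
noncomputable def arcDist (u : ℝ) : ℝ := min |u| (2 * π - |u|)

theorem continuous_arcDist : Continuous arcDist := by
  unfold arcDist; fun_prop

theorem arcDist_add_two_pi {u : ℝ} (hu : u ∈ Icc (-(2 * π)) 0) :
    arcDist (u + 2 * π) = arcDist u := by
  unfold arcDist
  rw [abs_of_nonneg (by linarith [hu.1]), abs_of_nonpos hu.2, min_comm]
  congr 1 <;> ring

theorem arcDist_eq_abs {u : ℝ} (hu : |u| ≤ π) : arcDist u = |u| :=
  min_eq_left (by linarith)

theorem integral_exp_neg_mul {β : ℝ} (hβ : β ≠ 0) (a : ℝ) :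
    ∫ u in (0)..a, exp (-(β * u)) = (1 - exp (-(β * a))) / β := by
  simp only [← neg_mul]
  rw [integral_comp_mul_left (fun u => exp u) (neg_ne_zero.2 hβ), integral_exp, smul_eq_mul,
    mul_zero, exp_zero]
  field_simp
  ring

theorem integral_exp_neg_mul_abs {β a : ℝ} (hβ : β ≠ 0) (ha : 0 ≤ a) :
    ∫ u in -a..a, exp (-(β * |u|)) = 2 * (1 - exp (-(β * a))) / β := by
  have hcont : Continuous fun u => exp (-(β * |u|)) := by fun_prop
  have hright : ∫ u in (0)..a, exp (-(β * |u|)) = (1 - exp (-(β * a))) / β := by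
    rw [← integral_exp_neg_mul hβ]
    refine integral_congr fun u hu => ?_
    rw [uIcc_of_le ha] at hu
    simp only [abs_of_nonneg hu.1]
  have hleft : ∫ u in -a..0, exp (-(β * |u|)) = ∫ u in (0)..a, exp (-(β * |u|)) := by
    simpa only [abs_neg, neg_zero] using
      (integral_comp_neg (a := 0) (b := a) fun u => exp (-(β * |u|))).symm
  rw [← integral_add_adjacent_intervals (hcont.intervalIntegrable _ _)
    (hcont.intervalIntegrable _ _), hleft, hright]
  ring

theorem integral_exp_neg_mul_arcDist_sub {β θ : ℝ} (hβ : β ≠ 0) (hθ : θ ∈ Icc (-π) π) :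
    ∫ θ' in -π..π, exp (-(β * arcDist (θ - θ'))) = 2 * (1 - exp (-(β * π))) / β := by
  set g : ℝ → ℝ := fun u => exp (-(β * arcDist u))
  have hg : Continuous g := ((continuous_arcDist.const_mul β).neg).rexp
  have hper : ∀ u ∈ uIcc (-π) (-π + θ), g (u + 2 * π) = g u := by
    intro u hu
    have : u ∈ Icc (-(2 * π)) 0 := by
      rcases mem_uIcc.1 hu with h | h <;> constructor <;> linarith [hθ.1, hθ.2, pi_pos]
    simp only [g, arcDist_add_two_pi this]
  have hshift := intervalIntegral_shift_eq_of_periodicOn hg.intervalIntegrable hper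
  rw [integral_comp_sub_left g θ, show θ - π = -π + θ by ring,
    show θ - -π = -π + θ + 2 * π by ring, hshift, show -π + 2 * π = π by ring,
    ← integral_exp_neg_mul_abs hβ pi_pos.le]
  refine integral_congr fun u hu => ?_
  rw [uIcc_of_le (by linarith [pi_pos])] at hu
  simp only [g, arcDist_eq_abs (abs_le.2 hu)]

theorem integral_exp_neg_mul_dCirc {β ρ θ : ℝ} (hβ : β ≠ 0) (hρ : ρ ≠ 0)
    (hθ : θ ∈ Icc (-π) π) :
    ∫ θ' in -π..π, exp (-(β * dCirc ρ θ θ')) = 2 * (1 - exp (-(β * ρ * π))) / (β * ρ) := by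
  have h : ∀ θ', β * dCirc ρ θ θ' = β * ρ * arcDist (θ - θ') := fun _ => (mul_assoc _ _ _).symm
  simp only [h]
  exact integral_exp_neg_mul_arcDist_sub (mul_ne_zero hβ hρ) hθ

theorem homogeneous_stationary_solution (σ μ F τ ρ Λ Φ : ℝ)
    (hσ : 1 < σ) (hμ : μ ∈ Set.Ioo (0 : ℝ) 1) (hF : 0 < F) (hτ : 0 < τ)
    (hρ : 0 < ρ) (hΛ : 0 < Λ) (hΦ : 0 < Φ)
    (α lbar pbar Gbar wbar Ybar : ℝ)
    (hα : α = τ * (σ - 1))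
    (hlbar : lbar = Λ / (2 * π * ρ))
    (hpbar : pbar = Φ / (2 * π * ρ))
    (hGbar : Gbar = (2 * lbar * (1 - Real.exp (-(α * ρ * π))) / (F * α)) ^ (1 / (1 - σ)))
    (hwbar : wbar = (μ * pbar / (σ * lbar)) / (1 - μ / σ))
    (hYbar : Ybar = wbar * lbar + pbar) :
    (∀ θ ∈ Set.Icc (-π) π,
      Gbar = ((1 / F) * ∫ θ' in (-π)..π, lbar * Real.exp (-(α * dCirc ρ θ θ')) * ρ)
        ^ (1 / (1 - σ))) ∧
    (∀ θ ∈ Set.Icc (-π) π,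
      wbar = (μ / (σ * F)) *
        ∫ θ' in (-π)..π, Ybar * Gbar ^ (σ - 1) * Real.exp (-(α * dCirc ρ θ θ')) * ρ) ∧
    0 ≤ wbar ∧ 0 ≤ Gbar ∧ 0 ≤ Ybar ∧
    (∀ v : ℝ,
      v * (wbar * Gbar ^ (-μ) -
        (1 / Λ) * ∫ θ in (-π)..π, wbar * Gbar ^ (-μ) * lbar * ρ) * lbar = 0) := by
  obtain ⟨hμ0, hμ1⟩ := hμ
  have hα0 : 0 < α := hα ▸ mul_pos hτ (sub_pos.2 hσ)
  have hl0 : 0 < lbar := hlbar ▸ by positivity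
  have hp0 : 0 < pbar := hpbar ▸ by positivity
  set K := 2 * (1 - exp (-(α * ρ * π))) / (α * ρ) with hK
  have hkernel : ∀ θ ∈ Icc (-π) π, ∫ θ' in -π..π, exp (-(α * dCirc ρ θ θ')) = K :=
    fun θ hθ => integral_exp_neg_mul_dCirc hα0.ne' hρ.ne' hθ
  have hK0 : 0 < K :=
    div_pos (mul_pos two_pos (sub_pos.2 (exp_lt_one_iff.2 (neg_lt_zero.2 (by positivity)))))
      (by positivity)
  have hbase : 2 * lbar * (1 - exp (-(α * ρ * π))) / (F * α) = lbar * ρ * K / F := by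
    rw [hK]; field_simp
  rw [hbase] at hGbar
  have hGpow : Gbar ^ (σ - 1) = F / (lbar * ρ * K) := by
    have hσ1 : 1 - σ ≠ 0 := by linarith
    rw [hGbar, ← rpow_mul (by positivity), show 1 / (1 - σ) * (σ - 1) = -1 by
      field_simp; ring, rpow_neg_one, inv_div]
  have hwage : σ * wbar * lbar = μ * Ybar := by
    have hσμ : σ - μ ≠ 0 := by linarith
    rw [hYbar, hwbar]; field_simp; ring
  have hw0 : 0 ≤ wbar := hwbar ▸ div_nonneg (by positivity) (by
    rw [sub_nonneg, div_le_one (by linarith)]; linarith)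
  refine ⟨fun θ hθ => ?_, fun θ hθ => ?_, hw0, hGbar ▸ by positivity,
    hYbar ▸ by positivity, fun v => ?_⟩
  · rw [integral_mul_const, integral_const_mul, hkernel θ hθ, hGbar]
    ring_nf
  · rw [integral_mul_const, integral_const_mul, hkernel θ hθ, hGpow]
    field_simp
    linarith
  · rw [integral_const, smul_eq_mul, hlbar]
    field_simp
    ring
end

section
/- Fix ρ > 0 and an integer k. The function α ↦ Z_k(α) := α²ρ²(1 − (−1)^{|k|}·e^{−αρπ}) / ((k² + α²ρ²)(1 − e^{−αρπ})) is monotone nondecreasing on (0, ∞), i.e. dZ_k/dα ≥ 0 for all α > 0. -/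
open Real

/-- The quantity `Z_k(α)` appearing in the stability analysis of the racetrack economy. -/
noncomputable def Zk (ρ : ℝ) (k : ℤ) (α : ℝ) : ℝ :=
  (α ^ 2 * ρ ^ 2 * (1 - (-1 : ℝ) ^ |k| * Real.exp (-(α * ρ * π)))) /
    (((k : ℝ) ^ 2 + α ^ 2 * ρ ^ 2) * (1 - Real.exp (-(α * ρ * π))))

/-! With `x = αρ`, `E = e^{-πx}` and `c = (-1)^{|k|}`,
`Z_k = x²(1 - cE) / ((k² + x²)(1 - E))`. The numerator of its derivative in `x` is
`2k²x(1 - E)(1 - cE) + (c - 1)πx²E(k² + x²)`. For even `k` this is visibly nonnegative.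
For odd `k` we have `k² ≥ 1`, and it equals `2x(k²(1 - E²) - πxE(k² + x²))`, which is
nonnegative because `e^t - e^{-t} ≥ e^t - 1 ≥ t + t³/6` and `π² ≥ 6`. -/

open Set

theorem monotoneOn_div_of_hasDerivAt {s : Set ℝ} (hs : Convex ℝ s) (hso : IsOpen s)
    {f g f' g' : ℝ → ℝ} (hf : ∀ x ∈ s, HasDerivAt f (f' x) x)
    (hg : ∀ x ∈ s, HasDerivAt g (g' x) x) (hg0 : ∀ x ∈ s, g x ≠ 0)
    (h : ∀ x ∈ s, 0 ≤ f' x * g x - f x * g' x) :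
    MonotoneOn (fun x => f x / g x) s := by
  have hfg : ∀ x ∈ s, HasDerivAt (fun x => f x / g x) ((f' x * g x - f x * g' x) / g x ^ 2) x :=
    fun x hx => (hf x hx).div (hg x hx) (hg0 x hx)
  refine monotoneOn_of_deriv_nonneg hs (fun x hx => (hfg x hx).continuousAt.continuousWithinAt)
    (fun x hx => ?_) (fun x hx => ?_) <;> rw [hso.interior_eq] at hx
  · exact (hfg x hx).differentiableAt.differentiableWithinAt
  · rw [(hfg x hx).deriv]
    exact div_nonneg (h x hx) (sq_nonneg _)

theorem mul_exp_neg_le_one_sub_exp_neg_sq {a t : ℝ} (ha : 1 ≤ a) (ht : 0 ≤ t) :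
    t * exp (-t) * (a + t ^ 2 / 6) ≤ a * (1 - exp (-t) ^ 2) := by
  have htaylor : 1 + t + t ^ 2 / 2 + t ^ 3 / 6 ≤ exp t := by
    simpa [Finset.sum_range_succ, Nat.factorial] using sum_le_exp_of_nonneg ht 4
  have hE : exp (-t) * exp t = 1 := by rw [← exp_add, neg_add_cancel, exp_zero]
  have hE1 : exp (-t) ≤ 1 := exp_le_one_iff.2 (neg_nonpos.2 ht)
  have hsinh : t * (a + t ^ 2 / 6) ≤ a * (exp t - exp (-t)) := by
    nlinarith [pow_nonneg ht 3, pow_nonneg ht 2]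
  calc t * exp (-t) * (a + t ^ 2 / 6) = exp (-t) * (t * (a + t ^ 2 / 6)) := by ring
    _ ≤ exp (-t) * (a * (exp t - exp (-t))) := by gcongr
    _ = a * (1 - exp (-t) ^ 2) := by linear_combination a * hE

noncomputable def Zprofile (a c x : ℝ) : ℝ :=
  x ^ 2 * (1 - c * exp (-(x * π))) / ((a + x ^ 2) * (1 - exp (-(x * π))))

theorem Zk_eq_Zprofile (ρ : ℝ) (k : ℤ) (α : ℝ) :
    Zk ρ k α = Zprofile ((k : ℝ) ^ 2) ((-1) ^ |k|) (α * ρ) := by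
  simp only [Zk, Zprofile, mul_pow]

theorem hasDerivAt_exp_neg_mul_const (c x : ℝ) :
    HasDerivAt (fun x => exp (-(x * c))) (-c * exp (-(x * c))) x := by
  simpa [mul_comm] using (hasDerivAt_mul_const c).neg.exp

theorem monotoneOn_Zprofile_of_nonneg {a c : ℝ} (ha : 0 ≤ a)
    (h : ∀ x > 0, 0 ≤ 2 * a * x * (1 - exp (-(x * π))) * (1 - c * exp (-(x * π)))
      + (c - 1) * π * x ^ 2 * exp (-(x * π)) * (a + x ^ 2)) :
    MonotoneOn (Zprofile a c) (Ioi 0) := by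
  refine monotoneOn_div_of_hasDerivAt (convex_Ioi 0) isOpen_Ioi
    (fun x _ => (hasDerivAt_pow 2 x).mul
      (((hasDerivAt_exp_neg_mul_const π x).const_mul c).const_sub 1))
    (fun x _ => ((hasDerivAt_pow 2 x).const_add a).mul
      ((hasDerivAt_exp_neg_mul_const π x).const_sub 1))
    (fun x (hx : 0 < x) => ?_) (fun x hx => ?_)
  · have : exp (-(x * π)) < 1 := exp_lt_one_iff.2 (neg_lt_zero.2 (mul_pos hx pi_pos))
    positivity
  · convert h x hx using 1
    ring

theorem monotoneOn_Zprofile_one {a : ℝ} (ha : 0 ≤ a) : MonotoneOn (Zprofile a 1) (Ioi 0) := by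
  refine monotoneOn_Zprofile_of_nonneg ha fun x hx => ?_
  have : exp (-(x * π)) ≤ 1 := exp_le_one_iff.2 (neg_nonpos.2 (mul_pos hx pi_pos).le)
  have : 0 ≤ 1 - exp (-(x * π)) := sub_nonneg.2 this
  simp only [sub_self, zero_mul, add_zero, one_mul]
  positivity

theorem monotoneOn_Zprofile_neg_one {a : ℝ} (ha : 1 ≤ a) :
    MonotoneOn (Zprofile a (-1)) (Ioi 0) := by
  refine monotoneOn_Zprofile_of_nonneg (by linarith) fun x hx => ?_
  have key := mul_exp_neg_le_one_sub_exp_neg_sq ha (mul_pos hx pi_pos).le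
  have hpi : 6 ≤ π ^ 2 := by nlinarith [pi_gt_three]
  have hx2 : x ^ 2 ≤ (x * π) ^ 2 / 6 := by rw [mul_pow]; nlinarith [sq_nonneg x]
  have hbound : π * x * exp (-(x * π)) * (a + x ^ 2) ≤ a * (1 - exp (-(x * π)) ^ 2) :=
    calc π * x * exp (-(x * π)) * (a + x ^ 2)
        ≤ x * π * exp (-(x * π)) * (a + (x * π) ^ 2 / 6) := by
          rw [mul_comm π x]; gcongr
      _ ≤ a * (1 - exp (-(x * π)) ^ 2) := key
  linarith [mul_le_mul_of_nonneg_left hbound (by positivity : (0 : ℝ) ≤ 2 * x)]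

theorem one_le_sq_of_odd {k : ℤ} (hk : Odd k) : (1 : ℝ) ≤ (k : ℝ) ^ 2 := by
  have hk0 : k ≠ 0 := by rintro rfl; simp at hk
  exact_mod_cast (one_le_sq_iff_one_le_abs k).2 (Int.one_le_abs hk0)

theorem Zk_monotone (ρ : ℝ) (hρ : 0 < ρ) (k : ℤ) :
    MonotoneOn (Zk ρ k) (Set.Ioi (0 : ℝ)) := by
  have hZ : MonotoneOn (Zprofile ((k : ℝ) ^ 2) ((-1) ^ |k|)) (Ioi 0) := by
    rcases Int.even_or_odd k with hk | hk
    · rw [(even_abs.2 hk).neg_one_zpow]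
      exact monotoneOn_Zprofile_one (sq_nonneg _)
    · rw [(odd_abs.2 hk).neg_one_zpow]
      exact monotoneOn_Zprofile_neg_one (one_le_sq_of_odd hk)
  intro α hα β hβ hαβ
  simp only [Zk_eq_Zprofile]
  exact hZ (mul_pos hα hρ) (mul_pos hβ hρ) (mul_le_mul_of_nonneg_right hαβ hρ.le)
end

section
/- Let v > 0, μ ∈ (0,1), σ > 1, and let w̄, λ̄, Ȳ, Ḡ be positive real constants. Define Γ(Z) := −vμḠ^{−μ}·( w̄Z/(1−σ) + ((Ȳ/λ̄)Z² − w̄Z)/(σ − μZ) ) and Z* := (w̄ + w̄σ/(σ−1)) / (μw̄/(σ−1) + Ȳ/λ̄). Then Z* > 0, and for every Z ∈ (0, 1) (for which σ − μZ > 0 automatically holds): Γ(Z) > 0 if and only if Z < Z*, and Γ(Z) < 0 if and only if Z > Z*. -/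
/-!
Clearing denominators, `Γ(Z)` is a positive multiple of `Z (N - D Z)` with
`N = w̄ (2σ - 1)` and `D = μ w̄ + (σ - 1) Ȳ/λ̄`, and `Z* = N / D` after multiplying numerator
and denominator by `σ - 1`. So on `Z > 0` the sign of `Γ` is that of the decreasing affine
function `N - D Z`, which vanishes exactly at `Z*`.
-/

open Real

lemma pos_mul_sub_mul_pos_iff {p a b z : ℝ} (hp : 0 < p) (hb : 0 < b) :
    0 < p * (a - b * z) ↔ z < a / b := by
  rw [mul_pos_iff_of_pos_left hp, sub_pos, lt_div_iff₀ hb, mul_comm]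

lemma pos_mul_sub_mul_neg_iff {p a b z : ℝ} (hp : 0 < p) (hb : 0 < b) :
    p * (a - b * z) < 0 ↔ a / b < z := by
  rw [← neg_pos, ← mul_neg, mul_pos_iff_of_pos_left hp, neg_pos, sub_neg, div_lt_iff₀ hb, mul_comm]

section Threshold

variable {μ σ w y : ℝ}

lemma threshold_eq_div (hσ : σ ≠ 1) :
    (w + w * σ / (σ - 1)) / (μ * w / (σ - 1) + y) =
      (w * (σ - 1) + w * σ) / (μ * w + (σ - 1) * y) := by
  have hσ1 : σ - 1 ≠ 0 := sub_ne_zero.mpr hσ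
  rw [← mul_div_mul_right _ _ hσ1]
  congr 1 <;> field_simp

lemma eigenvalue_eq_mul_affine (C : ℝ) {Z : ℝ} (hσ : σ ≠ 1) (hden : σ - μ * Z ≠ 0) :
    -C * (w * Z / (1 - σ) + (y * Z ^ 2 - w * Z) / (σ - μ * Z)) =
      C * Z / ((σ - 1) * (σ - μ * Z)) *
        ((w * (σ - 1) + w * σ) - (μ * w + (σ - 1) * y) * Z) := by
  have h1σ : 1 - σ ≠ 0 := sub_ne_zero.mpr hσ.symm
  have hσ1 : σ - 1 ≠ 0 := sub_ne_zero.mpr hσ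
  rw [div_add_div _ _ h1σ hden, mul_div_assoc', div_mul_eq_mul_div,
    div_eq_div_iff (mul_ne_zero h1σ hden) (mul_ne_zero hσ1 hden)]
  ring

end Threshold

theorem eigenvalue_sign_threshold (v μ σ wbar lbar Ybar Gbar : ℝ)
    (hv : 0 < v) (hμ : μ ∈ Set.Ioo (0 : ℝ) 1) (hσ : 1 < σ)
    (hw : 0 < wbar) (hl : 0 < lbar) (hY : 0 < Ybar) (hG : 0 < Gbar) :
    0 < (wbar + wbar * σ / (σ - 1)) / (μ * wbar / (σ - 1) + Ybar / lbar) ∧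
    ∀ Z ∈ Set.Ioo (0 : ℝ) 1,
      0 < σ - μ * Z ∧
      (0 < -(v * μ * Gbar ^ (-μ)) *
          (wbar * Z / (1 - σ) + ((Ybar / lbar) * Z ^ 2 - wbar * Z) / (σ - μ * Z)) ↔
        Z < (wbar + wbar * σ / (σ - 1)) / (μ * wbar / (σ - 1) + Ybar / lbar)) ∧
      (-(v * μ * Gbar ^ (-μ)) *
          (wbar * Z / (1 - σ) + ((Ybar / lbar) * Z ^ 2 - wbar * Z) / (σ - μ * Z)) < 0 ↔
        (wbar + wbar * σ / (σ - 1)) / (μ * wbar / (σ - 1) + Ybar / lbar) < Z) := by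
  obtain ⟨hμ0, hμ1⟩ := hμ
  have hσ1 : 0 < σ - 1 := sub_pos.mpr hσ
  have hC : 0 < v * μ * Gbar ^ (-μ) := by positivity
  have hN : 0 < wbar * (σ - 1) + wbar * σ := by positivity
  have hD : 0 < μ * wbar + (σ - 1) * (Ybar / lbar) := by positivity
  rw [threshold_eq_div hσ.ne']
  refine ⟨div_pos hN hD, fun Z ⟨hZ0, hZ1⟩ => ?_⟩
  have hden : 0 < σ - μ * Z := by nlinarith
  have hp : 0 < v * μ * Gbar ^ (-μ) * Z / ((σ - 1) * (σ - μ * Z)) := by positivity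
  rw [eigenvalue_eq_mul_affine _ hσ.ne' hden.ne']
  exact ⟨hden, pos_mul_sub_mul_pos_iff hp hD, pos_mul_sub_mul_neg_iff hp hD⟩
end

section
/- Let μ ∈ (0,1), σ > 1, λ̄ > 0, φ̄ > 0, and set w̄ := (μφ̄/(σλ̄))/(1 − μ/σ), Ȳ := w̄λ̄ + φ̄, and Z* := (w̄ + w̄σ/(σ−1)) / (μw̄/(σ−1) + Ȳ/λ̄). Then Z* < 1 if and only if σ − 1 > μ (the no-black-holes condition). -/
open Real

theorem no_black_holes_iff (μ σ lbar pbar : ℝ)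
    (hμ : μ ∈ Set.Ioo (0 : ℝ) 1) (hσ : 1 < σ) (hl : 0 < lbar) (hp : 0 < pbar) :
    ((μ * pbar / (σ * lbar)) / (1 - μ / σ) +
        (μ * pbar / (σ * lbar)) / (1 - μ / σ) * σ / (σ - 1)) /
      (μ * ((μ * pbar / (σ * lbar)) / (1 - μ / σ)) / (σ - 1) +
        ((μ * pbar / (σ * lbar)) / (1 - μ / σ) * lbar + pbar) / lbar) < 1 ↔
    μ < σ - 1 := by
  obtain ⟨hμ0, hμ1⟩ := hμ
  have hσ0 : 0 < σ := by linarith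
  have hσ1 : (0:ℝ) < σ - 1 := by linarith
  have hσμ : (0:ℝ) < σ - μ := by linarith
  have hq : (0:ℝ) < μ^2 + σ^2 - σ := by nlinarith
  have key : ((μ * pbar / (σ * lbar)) / (1 - μ / σ) +
        (μ * pbar / (σ * lbar)) / (1 - μ / σ) * σ / (σ - 1)) /
      (μ * ((μ * pbar / (σ * lbar)) / (1 - μ / σ)) / (σ - 1) +
        ((μ * pbar / (σ * lbar)) / (1 - μ / σ) * lbar + pbar) / lbar)
      = μ * (2 * σ - 1) / (μ^2 + σ^2 - σ) := by
    have h1 : 1 - μ / σ = (σ - μ) / σ := by field_simp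
    rw [h1]
    field_simp
    ring
  rw [key, div_lt_one hq]
  constructor
  · intro h; nlinarith
  · intro h; nlinarith
end

section
/- Fix ρ > 0 and α > 0. For every integer k ≠ 0, Z_{|k|+2}(α) < Z_{|k|}(α). Consequently, if k ≠ 0, Z* > 0, and α₁, α₂ > 0 satisfy Z_{|k|}(α₁) = Z* and Z_{|k|+2}(α₂) = Z*, then α₁ < α₂; in particular, with α = τ(σ−1) for σ > 1, the critical transport-cost values satisfy τ*_{|k|} < τ*_{|k|+2} and τ*_{−|k|} < τ*_{−|k|−2}. -/
/-!
Writing `u = αρ` and `E = e^{-πu}`, `Z_k = u²(1 - (-1)^{|k|} E) / ((k² + u²)(1 - E))`.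
Raising `|k|` by two keeps the parity factor and only enlarges the denominator, so `Z_{|k|+2} < Z_{|k|}`
pointwise. For even `k`, `Z_k = u²/(k² + u²)` is increasing; for odd `k` the quotient rule reduces
monotonicity to `πu(k² + u²) < 2k² sinh(πu)`, which follows from `sinh x ≥ x + x³/6` and `π² > 3`.
Monotonicity of `Z_{|k|}` then turns `Z_{|k|}(α₁) = Z_{|k|+2}(α₂) < Z_{|k|}(α₂)` into `α₁ < α₂`.
-/

open Real

open Set

lemma add_pow_three_div_six_le_sinh {x : ℝ} (hx : 0 ≤ x) : x + x ^ 3 / 6 ≤ sinh x := by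
  have h := sum_le_hasSum (Finset.range 2) (fun n _ => by positivity) (hasSum_sinh x)
  norm_num [Finset.sum_range_succ, Nat.factorial] at h
  linarith

lemma mul_sq_add_sq_lt_two_mul_sinh {m u : ℝ} (hm : 1 ≤ m ^ 2) (hu : 0 < u) :
    u * π * (m ^ 2 + u ^ 2) < 2 * m ^ 2 * sinh (u * π) := by
  have hsinh := add_pow_three_div_six_le_sinh (mul_pos hu pi_pos).le
  have hπ : 3 < π := pi_gt_three
  have hcube : 0 < (u * π) ^ 3 := by positivity
  have hm3 : (u * π) ^ 3 ≤ m ^ 2 * (u * π) ^ 3 := by nlinarith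
  have hπ3 : 3 * (u ^ 3 * π) < (u * π) ^ 3 := by
    have : 0 < u ^ 3 * π * (π ^ 2 - 3) := mul_pos (by positivity) (by nlinarith)
    nlinarith
  nlinarith [mul_le_mul_of_nonneg_left hsinh (by positivity : (0:ℝ) ≤ 2 * m ^ 2),
    mul_pos (by positivity : (0:ℝ) < m ^ 2) (mul_pos hu pi_pos)]

noncomputable def zProfile (m s u : ℝ) : ℝ :=
  u ^ 2 * (1 - s * exp (-(u * π))) / ((m ^ 2 + u ^ 2) * (1 - exp (-(u * π))))

lemma exp_neg_mul_pi_lt_one {u : ℝ} (hu : 0 < u) : exp (-(u * π)) < 1 :=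
  exp_lt_one_iff.mpr (neg_lt_zero.mpr (mul_pos hu pi_pos))

lemma zProfile_one {u : ℝ} (m : ℝ) (hu : 0 < u) : zProfile m 1 u = u ^ 2 / (m ^ 2 + u ^ 2) := by
  rw [zProfile, one_mul, mul_div_mul_right _ _ (sub_pos.mpr (exp_neg_mul_pi_lt_one hu)).ne']

lemma zProfile_one_monotoneOn (m : ℝ) : MonotoneOn (zProfile m 1) (Ioi 0) := by
  rintro u (hu : 0 < u) v (hv : 0 < v) huv
  rw [zProfile_one m hu, zProfile_one m hv, div_le_div_iff₀ (by positivity) (by positivity)]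
  nlinarith [mul_le_mul huv huv (le_of_lt hu) (le_of_lt hv), sq_nonneg m]

lemma hasDerivAt_zProfile_neg_one (m u : ℝ) (hu : 0 < u) :
    HasDerivAt (zProfile m (-1))
      (2 * u * (m ^ 2 * (1 - exp (-(u * π)) ^ 2) - u * π * exp (-(u * π)) * (m ^ 2 + u ^ 2)) /
        ((m ^ 2 + u ^ 2) * (1 - exp (-(u * π)))) ^ 2) u := by
  have hE : HasDerivAt (fun v => exp (-(v * π))) (-(π * exp (-(u * π)))) u := by
    simpa [mul_comm] using ((hasDerivAt_mul_const π).neg (x := u)).exp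
  have hnum := (hasDerivAt_pow 2 u).mul ((hE.const_mul (-1)).const_sub 1)
  have hden := ((hasDerivAt_pow 2 u).const_add (m ^ 2)).mul (hE.const_sub 1)
  have hq : (m ^ 2 + u ^ 2) * (1 - exp (-(u * π))) ≠ 0 :=
    (mul_pos (by positivity) (sub_pos.mpr (exp_neg_mul_pi_lt_one hu))).ne'
  exact (hnum.div hden hq).congr_deriv (by simp only [Pi.mul_apply]; ring)

lemma zProfile_neg_one_strictMonoOn {m : ℝ} (hm : 1 ≤ m ^ 2) :
    StrictMonoOn (zProfile m (-1)) (Ioi 0) := by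
  refine strictMonoOn_of_deriv_pos (convex_Ioi 0)
    (fun u hu => (hasDerivAt_zProfile_neg_one m u hu).continuousAt.continuousWithinAt) ?_
  rw [interior_Ioi]
  rintro u (hu : 0 < u)
  rw [(hasDerivAt_zProfile_neg_one m u hu).deriv]
  set E := exp (-(u * π))
  have hE : 0 < E := exp_pos _
  have hsinh : m ^ 2 * (1 - E ^ 2) = E * (2 * m ^ 2 * sinh (u * π)) := by
    have hinv : exp (u * π) * E = 1 := by rw [← exp_add, add_neg_cancel, exp_zero]
    rw [sinh_eq]
    linear_combination (-m ^ 2) * hinv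
  have hq : (m ^ 2 + u ^ 2) * (1 - E) ≠ 0 :=
    (mul_pos (by positivity) (sub_pos.mpr (exp_neg_mul_pi_lt_one hu))).ne'
  have key := mul_lt_mul_of_pos_left (mul_sq_add_sq_lt_two_mul_sinh hm hu) hE
  have : 0 < m ^ 2 * (1 - E ^ 2) - u * π * E * (m ^ 2 + u ^ 2) := by
    rw [hsinh]; linarith
  positivity

lemma zProfile_lt_zProfile_of_sq_lt {m n s u : ℝ} (hs : s ≤ 1) (hu : 0 < u) (hmn : m ^ 2 < n ^ 2) :
    zProfile n s u < zProfile m s u := by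
  have hE := exp_pos (-(u * π))
  have hE1 := sub_pos.mpr (exp_neg_mul_pi_lt_one hu)
  refine div_lt_div_of_pos_left ?_ (by positivity) (by gcongr)
  have : s * exp (-(u * π)) < 1 := by nlinarith
  have := sub_pos.mpr this
  positivity

lemma Zk_eq_zProfile (ρ : ℝ) (k : ℤ) (α : ℝ) :
    Zk ρ k α = zProfile k ((-1) ^ |k|) (α * ρ) := by
  rw [Zk, zProfile, mul_pow]

lemma Zk_neg (ρ : ℝ) (k : ℤ) (α : ℝ) : Zk ρ (-k) α = Zk ρ k α := by
  rw [Zk, Zk, abs_neg, Int.cast_neg, neg_sq]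

lemma Zk_monotoneOn {ρ : ℝ} (hρ : 0 < ρ) (k : ℤ) : MonotoneOn (Zk ρ k) (Ioi 0) := by
  have hprofile : MonotoneOn (zProfile k ((-1) ^ |k|)) (Ioi 0) := by
    rcases Int.even_or_odd |k| with heven | hodd
    · rw [heven.neg_one_zpow]
      exact zProfile_one_monotoneOn _
    · have hk0 : k ≠ 0 := by rintro rfl; simp at hodd
      have hk : (1 : ℝ) ≤ |(k : ℝ)| := by exact_mod_cast Int.one_le_abs hk0
      rw [hodd.neg_one_zpow]
      exact (zProfile_neg_one_strictMonoOn (one_le_sq_iff_one_le_abs _ |>.mpr hk)).monotoneOn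
  rintro a (ha : 0 < a) b (hb : 0 < b) hab
  rw [Zk_eq_zProfile, Zk_eq_zProfile]
  exact hprofile (mul_pos ha hρ) (mul_pos hb hρ) (mul_le_mul_of_nonneg_right hab hρ.le)

lemma Zk_add_two_lt {ρ : ℝ} (hρ : 0 < ρ) {k : ℤ} (hk : 0 ≤ k) {α : ℝ} (hα : 0 < α) :
    Zk ρ (k + 2) α < Zk ρ k α := by
  have hparity : (-1 : ℝ) ^ |k + 2| = (-1) ^ |k| := by
    rw [abs_of_nonneg hk, abs_of_nonneg (by omega), zpow_add₀ (by norm_num)]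
    norm_num
  rw [Zk_eq_zProfile, Zk_eq_zProfile, hparity]
  refine zProfile_lt_zProfile_of_sq_lt ((le_abs_self _).trans (abs_neg_one_zpow _).le)
    (mul_pos hα hρ) ?_
  have hk' : (0 : ℝ) ≤ k := by exact_mod_cast hk
  push_cast
  nlinarith

lemma lt_of_Zk_eq_Zk_add_two {ρ : ℝ} (hρ : 0 < ρ) {k : ℤ} (hk : 0 ≤ k) {α₁ α₂ : ℝ}
    (h₁ : 0 < α₁) (h₂ : 0 < α₂) (h : Zk ρ k α₁ = Zk ρ (k + 2) α₂) : α₁ < α₂ := by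
  by_contra! h21
  have := Zk_monotoneOn hρ k h₂ h₁ h21
  have := Zk_add_two_lt hρ hk h₂
  linarith

theorem critical_points_increase_with_frequency_general (ρ : ℝ) (hρ : 0 < ρ) (k : ℤ) :
    (∀ α : ℝ, 0 < α → Zk ρ (|k| + 2) α < Zk ρ |k| α) ∧
    (∀ Zstar : ℝ, 0 < Zstar → ∀ α₁ α₂ : ℝ, 0 < α₁ → 0 < α₂ →
      Zk ρ |k| α₁ = Zstar → Zk ρ (|k| + 2) α₂ = Zstar → α₁ < α₂) ∧
    (∀ σ : ℝ, 1 < σ → ∀ Zstar : ℝ, 0 < Zstar → ∀ τ₁ τ₂ : ℝ, 0 < τ₁ → 0 < τ₂ →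
      ((Zk ρ |k| (τ₁ * (σ - 1)) = Zstar → Zk ρ (|k| + 2) (τ₂ * (σ - 1)) = Zstar → τ₁ < τ₂) ∧
       (Zk ρ (-|k|) (τ₁ * (σ - 1)) = Zstar → Zk ρ (-|k| - 2) (τ₂ * (σ - 1)) = Zstar → τ₁ < τ₂))) := by
  have hk := abs_nonneg k
  refine ⟨fun α hα => Zk_add_two_lt hρ hk hα,
    fun _ _ α₁ α₂ h₁ h₂ e₁ e₂ => lt_of_Zk_eq_Zk_add_two hρ hk h₁ h₂ (e₁.trans e₂.symm), ?_⟩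
  intro σ hσ _ _ τ₁ τ₂ h₁ h₂
  have hσ₁ : 0 < σ - 1 := sub_pos.mpr hσ
  have hτ : Zk ρ |k| (τ₁ * (σ - 1)) = Zk ρ (|k| + 2) (τ₂ * (σ - 1)) → τ₁ < τ₂ := fun h =>
    lt_of_mul_lt_mul_right
      (lt_of_Zk_eq_Zk_add_two hρ hk (mul_pos h₁ hσ₁) (mul_pos h₂ hσ₁) h) hσ₁.le
  refine ⟨fun e₁ e₂ => hτ (e₁.trans e₂.symm), fun e₁ e₂ => hτ ?_⟩
  rw [← Zk_neg ρ |k|, ← Zk_neg ρ (|k| + 2), neg_add', e₁, e₂]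

theorem critical_points_increase_with_frequency (ρ : ℝ) (hρ : 0 < ρ) (k : ℤ) (hk : k ≠ 0) :
    (∀ α : ℝ, 0 < α → Zk ρ (|k| + 2) α < Zk ρ |k| α) ∧
    (∀ Zstar : ℝ, 0 < Zstar → ∀ α₁ α₂ : ℝ, 0 < α₁ → 0 < α₂ →
      Zk ρ |k| α₁ = Zstar → Zk ρ (|k| + 2) α₂ = Zstar → α₁ < α₂) ∧
    (∀ σ : ℝ, 1 < σ → ∀ Zstar : ℝ, 0 < Zstar → ∀ τ₁ τ₂ : ℝ, 0 < τ₁ → 0 < τ₂ →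
      ((Zk ρ |k| (τ₁ * (σ - 1)) = Zstar → Zk ρ (|k| + 2) (τ₂ * (σ - 1)) = Zstar → τ₁ < τ₂) ∧
       (Zk ρ (-|k|) (τ₁ * (σ - 1)) = Zstar → Zk ρ (-|k| - 2) (τ₂ * (σ - 1)) = Zstar → τ₁ < τ₂))) :=
  critical_points_increase_with_frequency_general ρ hρ k
end
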